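/- arXiv:0909.4966 — 5 statements merged into one kernel-verified Lean document; each statement's English description precedes it below -/
import Mathlib

section
/- Let n, k ≥ 1 and let w ∈ S_{nk}, written in n consecutive blocks of length k as w = w_{1,1} w_{1,2} ⋯ w_{1,k} w_{2,1} ⋯ w_{n,k}. If w satisfies condition (L1) (that is, w_{i,j} < w_{i,j+1} for all 1 ≤ i ≤ n, 1 ≤ j ≤ k−1) and w avoids the monotone pattern 12⋯(k+2), then w satisfies condition (L2) (that is, w_{i,j+1} > w_{i+1,j} for all 1 ≤ i ≤ n−1, 1 ≤ j ≤ k−1). Consequently, L_{n,k}(12⋯(k+2)) equals the set of permutations in S_{nk} avoiding 12⋯(k+2) whose descent set is contained in {k, 2k, …, (n−1)k}. -/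
/-- The word `w` (a sequence of distinct values) contains the pattern `p`. -/
def ContainsPat {N s : ℕ} {α : Type*} [LinearOrder α]
    (w : Fin N → α) (p : Fin s → ℕ) : Prop :=
  ∃ f : Fin s → Fin N, StrictMono f ∧ ∀ a b : Fin s, p a < p b ↔ w (f a) < w (f b)

/-- The word `w` avoids the pattern `p`. -/
def AvoidsPat {N s : ℕ} {α : Type*} [LinearOrder α]
    (w : Fin N → α) (p : Fin s → ℕ) : Prop :=
  ¬ ContainsPat w p

/-- The monotone (identity) pattern `1 2 ⋯ m`. -/
def MonoPat (m : ℕ) : Fin m → ℕ := fun i => (i : ℕ)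

/-- Position of the entry `w_{i,j}` (with `i`, `j` 0-indexed) of a word of length `n * k`
written in `n` consecutive blocks of length `k`. -/
def Lpos (n k i j : ℕ) (hi : i < n) (hj : j < k) : Fin (n * k) :=
  ⟨i * k + j, by
    calc i * k + j < i * k + k := by omega
      _ = (i + 1) * k := by ring
      _ ≤ n * k := Nat.mul_le_mul (Nat.succ_le_of_lt hi) (le_refl k)⟩

/-- Membership in `L_{n,k}`: conditions (L1) and (L2). -/
def MemL (n k : ℕ) (w : Equiv.Perm (Fin (n * k))) : Prop :=
  (∀ (i j : ℕ) (hi : i < n) (hj : j + 1 < k),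
      w (Lpos n k i j hi (by omega)) < w (Lpos n k i (j + 1) hi hj)) ∧
  (∀ (i j : ℕ) (hi : i + 1 < n) (hj : j + 1 < k),
      w (Lpos n k (i + 1) j hi (by omega)) < w (Lpos n k i (j + 1) (by omega) hj))

/-- Position of the entry `w_{i,j}` (`i`, `j` 0-indexed) among the `n` blocks of length `k`
following the initial block of length `r`. -/
def LrPos (n k r i j : ℕ) (hi : i < n) (hj : j < k) : Fin (n * k + r) :=
  ⟨r + (i * k + j), by
    have h : i * k + j < n * k := by
      calc i * k + j < i * k + k := by omega
        _ = (i + 1) * k := by ring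
        _ ≤ n * k := Nat.mul_le_mul (Nat.succ_le_of_lt hi) (le_refl k)
    omega⟩

/-- Membership in `L_{n,k;r}`: conditions (L1′) and (L2′). -/
def MemLr (n k r : ℕ) (w : Equiv.Perm (Fin (n * k + r))) : Prop :=
  (∀ (j : ℕ) (hj : j + 1 < r), w ⟨j, by omega⟩ < w ⟨j + 1, by omega⟩) ∧
  (∀ (i j : ℕ) (hi : i < n) (hj : j + 1 < k),
      w (LrPos n k r i j hi (by omega)) < w (LrPos n k r i (j + 1) hi hj)) ∧
  (∀ (i j : ℕ) (hi : i + 1 < n) (hj : j + 1 < k),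
      w (LrPos n k r (i + 1) j hi (by omega)) < w (LrPos n k r i (j + 1) (by omega) hj)) ∧
  (∀ (j : ℕ) (hj : j < r) (h : r + j < n * k + r), w ⟨r + j, h⟩ < w ⟨j, by omega⟩)

/-- `w` is an (up-down) alternating permutation: `w_1 < w_2 > w_3 < w_4 > ⋯`. -/
def IsAlternating {m : ℕ} (w : Equiv.Perm (Fin m)) : Prop :=
  ∀ (i : ℕ) (h : i + 1 < m),
    (Even i → w ⟨i, Nat.lt_of_succ_lt h⟩ < w ⟨i + 1, h⟩) ∧
    (¬ Even i → w ⟨i + 1, h⟩ < w ⟨i, Nat.lt_of_succ_lt h⟩)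

/-- `f : ℕ → ℕ` (0-indexed parts) is a partition: weakly decreasing, eventually zero. -/
def IsPartitionFun (f : ℕ → ℕ) : Prop :=
  (∀ i, f (i + 1) ≤ f i) ∧ ∃ N, ∀ i, N ≤ i → f i = 0

/-- The rectangular partition `⟨m^n⟩` as a function. -/
def RectShape (n m : ℕ) : ℕ → ℕ := fun i => if i < n then m else 0

/-- `c = (i, j)` (0-indexed row `i`, column `j`) is a box of the skew diagram `λ/μ`. -/
def IsCell (lam mu : ℕ → ℕ) (c : ℕ × ℕ) : Prop :=
  mu c.1 ≤ c.2 ∧ c.2 < lam c.1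

/-- A standard Young tableau of skew shape `λ/μ`: a filling of the boxes by `1, …, m`
(each used once, `m` = number of boxes), strictly increasing along rows and columns.
Boxes outside of the shape are filled with `0`. -/
structure SkewSYT (lam mu : ℕ → ℕ) where
  entry : ℕ × ℕ → ℕ
  entry_outside : ∀ c, ¬ IsCell lam mu c → entry c = 0
  entry_pos : ∀ c, IsCell lam mu c → 1 ≤ entry c
  entry_inj : ∀ c c', IsCell lam mu c → IsCell lam mu c' → entry c = entry c' → c = c'
  entry_init : ∀ c, IsCell lam mu c → ∀ v, 1 ≤ v → v < entry c →
      ∃ c', IsCell lam mu c' ∧ entry c' = v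
  row_strict : ∀ i j j', IsCell lam mu (i, j) → IsCell lam mu (i, j') → j < j' →
      entry (i, j) < entry (i, j')
  col_strict : ∀ i i' j, IsCell lam mu (i, j) → IsCell lam mu (i', j) → i < i' →
      entry (i, j) < entry (i', j)

/-- `c` comes strictly before `c'` in reading order (last row first, rows left to right). -/
def ReadLT (c c' : ℕ × ℕ) : Prop :=
  c'.1 < c.1 ∨ (c.1 = c'.1 ∧ c.2 < c'.2)

/-- The reading word of the tableau `T` contains the pattern `p`. -/
def ReadingContains {lam mu : ℕ → ℕ} (T : SkewSYT lam mu) {s : ℕ} (p : Fin s → ℕ) : Prop :=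
  ∃ c : Fin s → ℕ × ℕ,
    (∀ a, IsCell lam mu (c a)) ∧
    (∀ a b : Fin s, a < b → ReadLT (c a) (c b)) ∧
    (∀ a b : Fin s, p a < p b ↔ T.entry (c a) < T.entry (c b))

/-- Number of boxes of the skew diagram `λ/μ`. -/
noncomputable def NumCells (lam mu : ℕ → ℕ) : ℕ := Set.ncard {c : ℕ × ℕ | IsCell lam mu c}

/-- The `j`-th part (1-indexed) of the conjugate partition of `λ`:
the number of rows of `λ` of length at least `j`. -/
noncomputable def ConjPart (lam : ℕ → ℕ) (j : ℕ) : ℕ := Set.ncard {i : ℕ | j ≤ lam i}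

lemma chain_strictMono {m : ℕ} {α : Type*} [Preorder α] (g : Fin m → α)
    (h : ∀ i, ∀ hi : i + 1 < m, g ⟨i, Nat.lt_of_succ_lt hi⟩ < g ⟨i + 1, hi⟩) :
    StrictMono g := by
  have key : ∀ d a, ∀ ha : a + d + 1 < m, g ⟨a, by omega⟩ < g ⟨a + d + 1, ha⟩ := by
    intro d
    induction d with
    | zero => intro a ha; exact h a ha
    | succ d ih =>
      intro a ha
      exact (ih a (by omega)).trans (h (a + d + 1) (by omega))
  intro a b hab
  rw [show b = ⟨(a : ℕ) + ((b : ℕ) - (a : ℕ) - 1) + 1, by omega⟩ from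
    Fin.ext (by simp; omega)]
  exact key ((b : ℕ) - (a : ℕ) - 1) a (by omega)

lemma L1_raw {n k : ℕ} (w : Equiv.Perm (Fin (n * k)))
    (hL1 : ∀ (i j : ℕ) (hi : i < n) (hj : j + 1 < k),
        w (Lpos n k i j hi (by omega)) < w (Lpos n k i (j + 1) hi hj))
    (i j : ℕ) (hi : i < n) (hj : j + 1 < k)
    (h1 : i * k + j < n * k) (h2 : i * k + j + 1 < n * k) :
    w ⟨i * k + j, h1⟩ < w ⟨i * k + j + 1, h2⟩ :=
  hL1 i j hi hj

lemma part1 (n k : ℕ) (w : Equiv.Perm (Fin (n * k)))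
    (hL1 : ∀ (i j : ℕ) (hi : i < n) (hj : j + 1 < k),
        w (Lpos n k i j hi (by omega)) < w (Lpos n k i (j + 1) hi hj))
    (hav : AvoidsPat (⇑w) (MonoPat (k + 2)))
    (i j : ℕ) (hi : i + 1 < n) (hj : j + 1 < k) :
    w (Lpos n k (i + 1) j hi (by omega)) < w (Lpos n k i (j + 1) (by omega) hj) := by
  by_contra hcon
  have hmul1 : (i + 1) * k = i * k + k := by ring
  have hmul2 : (i + 2) * k = i * k + k + k := by ring
  have hmul3 : (i + 2) * k ≤ n * k := Nat.mul_le_mul_right k (by omega)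
  rw [hmul2] at hmul3
  -- the two entries have distinct values
  have hne : w (Lpos n k i (j + 1) (by omega) hj) ≠ w (Lpos n k (i + 1) j hi (by omega)) := by
    intro h
    have := w.injective h
    rw [Fin.ext_iff] at this
    simp only [Lpos] at this
    omega
  have hlt : w (Lpos n k i (j + 1) (by omega) hj) < w (Lpos n k (i + 1) j hi (by omega)) :=
    lt_of_le_of_ne (not_lt.mp hcon) hne
  apply hav
  -- the monotone pattern occurrence
  have hbound : ∀ t : Fin (k + 2),
      (if (t : ℕ) ≤ j + 1 then i * k + (t : ℕ) else (i + 1) * k + ((t : ℕ) - 2)) < n * k := by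
    intro t
    have ht := t.isLt
    split <;> omega
  set f : Fin (k + 2) → Fin (n * k) := fun t =>
    ⟨if (t : ℕ) ≤ j + 1 then i * k + (t : ℕ) else (i + 1) * k + ((t : ℕ) - 2),
      hbound t⟩ with hf
  have hfmono : StrictMono f := by
    intro a b hab
    have hab' : (a : ℕ) < (b : ℕ) := hab
    simp only [hf, Fin.mk_lt_mk]
    split_ifs <;> omega
  have hwf : StrictMono (fun t => w (f t)) := by
    apply chain_strictMono
    intro t ht
    rcases lt_trichotomy t (j + 1) with h1 | h1 | h1
    · have e1 : f ⟨t, Nat.lt_of_succ_lt ht⟩ = ⟨i * k + t, by omega⟩ := by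
        simp only [hf]; rw [Fin.ext_iff]; simp; first | omega | (intros; omega) | (split <;> intros <;> omega)
      have e2 : f ⟨t + 1, ht⟩ = ⟨i * k + t + 1, by omega⟩ := by
        simp only [hf]; rw [Fin.ext_iff]; simp; first | omega | (intros; omega) | (split <;> intros <;> omega)
      rw [e1, e2]
      exact L1_raw w hL1 i t (by omega) (by omega) _ _
    · have e1 : f ⟨t, Nat.lt_of_succ_lt ht⟩ = ⟨i * k + (j + 1), by omega⟩ := by
        simp only [hf]; rw [Fin.ext_iff]; simp; first | omega | (intros; omega) | (split <;> intros <;> omega)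
      have e2 : f ⟨t + 1, ht⟩ = ⟨(i + 1) * k + j, by omega⟩ := by
        simp only [hf]; rw [Fin.ext_iff]; simp; first | omega | (intros; omega) | (split <;> intros <;> omega)
      rw [e1, e2]
      exact hlt
    · have e1 : f ⟨t, Nat.lt_of_succ_lt ht⟩ = ⟨(i + 1) * k + (t - 2), by omega⟩ := by
        simp only [hf]; rw [Fin.ext_iff]; simp; first | omega | (intros; omega) | (split <;> intros <;> omega)
      have e2 : f ⟨t + 1, ht⟩ = ⟨(i + 1) * k + (t - 2) + 1, by omega⟩ := by
        simp only [hf]; rw [Fin.ext_iff]; simp; first | omega | (intros; omega) | (split <;> intros <;> omega)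
      rw [e1, e2]
      exact L1_raw w hL1 (i + 1) (t - 2) (by omega) (by omega) _ _
  exact ⟨f, hfmono, fun a b => by
    constructor
    · intro h
      exact hwf (show a < b from h)
    · intro h
      exact hwf.lt_iff_lt.mp h⟩

/-- If `w ∈ S_{nk}` satisfies (L1) and avoids `1 2 ⋯ (k+2)`, then `w` satisfies (L2).
Consequently, `L_{n,k}(1⋯(k+2))` is the set of `1⋯(k+2)`-avoiding permutations of `S_{nk}`
whose descent set is contained in `{k, 2k, …, (n−1)k}`. -/
theorem stmt_0 (n k : ℕ) (hn : 1 ≤ n) (hk : 1 ≤ k) :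
    (∀ w : Equiv.Perm (Fin (n * k)),
      (∀ (i j : ℕ) (hi : i < n) (hj : j + 1 < k),
          w (Lpos n k i j hi (by omega)) < w (Lpos n k i (j + 1) hi hj)) →
      AvoidsPat (⇑w) (MonoPat (k + 2)) →
      (∀ (i j : ℕ) (hi : i + 1 < n) (hj : j + 1 < k),
          w (Lpos n k (i + 1) j hi (by omega)) < w (Lpos n k i (j + 1) (by omega) hj))) ∧
    (∀ w : Equiv.Perm (Fin (n * k)),
      (MemL n k w ∧ AvoidsPat (⇑w) (MonoPat (k + 2))) ↔
      (AvoidsPat (⇑w) (MonoPat (k + 2)) ∧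
        ∀ (i : ℕ) (h : i + 1 < n * k),
          w ⟨i + 1, h⟩ < w ⟨i, Nat.lt_of_succ_lt h⟩ → k ∣ (i + 1))) := by
  constructor
  · intro w hL1 hav i j hi hj
    exact part1 n k w hL1 hav i j hi hj
  · intro w
    constructor
    · rintro ⟨⟨hL1, _⟩, hav⟩
      refine ⟨hav, ?_⟩
      intro i h hdesc
      by_contra hndvd
      set q := i / k with hq
      set j := i % k with hjj
      have hik : i = q * k + j := by
        rw [hq, hjj, Nat.mul_comm]; exact (Nat.div_add_mod i k).symm
      have hjk : j < k := Nat.mod_lt _ (by omega)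
      have hjk' : j + 1 < k := by
        rcases Nat.lt_or_ge (j + 1) k with h' | h'
        · exact h'
        · exfalso; apply hndvd
          have hjk1 : j + 1 = k := by omega
          have hr : k * (q + 1) = q * k + k := by ring
          exact ⟨q + 1, by omega⟩
      have hqn : q < n := by
        by_contra hqn
        have : n * k ≤ q * k := Nat.mul_le_mul_right k (by omega)
        omega
      have := L1_raw w hL1 q j hqn hjk' (by omega) (by omega)
      have e1 : (⟨q * k + j, by omega⟩ : Fin (n * k)) = ⟨i, Nat.lt_of_succ_lt h⟩ :=
        Fin.ext (show q * k + j = i by omega)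
      have e2 : (⟨q * k + j + 1, by omega⟩ : Fin (n * k)) = ⟨i + 1, h⟩ :=
        Fin.ext (show q * k + j + 1 = i + 1 by omega)
      rw [e1, e2] at this
      exact absurd hdesc (not_lt.mpr this.le)
    · rintro ⟨hav, hdes⟩
      have hL1 : ∀ (i j : ℕ) (hi : i < n) (hj : j + 1 < k),
          w (Lpos n k i j hi (by omega)) < w (Lpos n k i (j + 1) hi hj) := by
        intro i j hi hj
        have hlt1 : i * k + j + 1 < n * k := by
          have : (i + 1) * k ≤ n * k := Nat.mul_le_mul_right k (by omega)
          have h2 : (i + 1) * k = i * k + k := by ring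
          omega
        have hne : w (Lpos n k i j hi (by omega)) ≠ w (Lpos n k i (j + 1) hi hj) := by
          intro h
          have := w.injective h
          rw [Fin.ext_iff] at this
          simp only [Lpos] at this
          omega
        rcases lt_or_ge (w (Lpos n k i j hi (by omega))) (w (Lpos n k i (j + 1) hi hj))
          with h' | h'
        · exact h'
        · exfalso
          have hdesc : w ⟨i * k + j + 1, hlt1⟩ < w ⟨i * k + j, Nat.lt_of_succ_lt hlt1⟩ := by
            have e1 : (Lpos n k i j hi (by omega : j < k)) =
                (⟨i * k + j, Nat.lt_of_succ_lt hlt1⟩ : Fin (n * k)) := Fin.ext rfl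
            have e2 : (Lpos n k i (j + 1) hi hj) =
                (⟨i * k + j + 1, hlt1⟩ : Fin (n * k)) := Fin.ext rfl
            rw [e1, e2] at h' hne
            exact lt_of_le_of_ne h' (Ne.symm hne)
          have := hdes (i * k + j) hlt1 hdesc
          rcases this with ⟨c, hc⟩
          -- i*k + j + 1 = k * c with 0 < j+1 < k : impossible
          have h1 : (j + 1 + i * k) % k = (j + 1) % k := Nat.add_mul_mod_self_right _ _ _
          have h2 : (j + 1) % k = j + 1 := Nat.mod_eq_of_lt (by omega)
          have h3 : (k * c) % k = 0 := Nat.mul_mod_right k c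
          have h4 : (j + 1 + i * k) % k = (k * c) % k := by
            rw [show j + 1 + i * k = k * c by omega]
          omega
      exact ⟨⟨hL1, fun i j hi hj => part1 n k w hL1 hav i j hi hj⟩, hav⟩
end

section
/- For all n, k ≥ 1, the number of good tableaux of shape ⟨(k+1)^n⟩ equals the number of standard Young tableaux of shape ⟨(k+1)^n⟩. -/
/-- A good tableau of shape `⟨(k+1)^n⟩`: rows 0-indexed by `Fin n`, columns by `Fin (k+1)`.
(G1): each row starts with `1`, strictly increases, and its last entry is at most
`(n−i+1)k+1` (1-indexed row `i`); (G2): `T_{i,j} ≤ T_{i+1,j} + j − 1` (1-indexed `j`). -/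
structure GoodTableau (n k : ℕ) where
  entry : Fin n → Fin (k + 1) → ℕ
  g1_first : ∀ i, entry i 0 = 1
  g1_mono : ∀ i, StrictMono (entry i)
  g1_last : ∀ i : Fin n, entry i (Fin.last k) ≤ (n - (i : ℕ)) * k + 1
  g2 : ∀ (i : ℕ) (h : i + 1 < n) (j : Fin (k + 1)),
      entry ⟨i, Nat.lt_of_succ_lt h⟩ j ≤ entry ⟨i + 1, h⟩ j + (j : ℕ)

/-!
For a standard Young tableau `S` of shape `⟨(k+1)^n⟩`, let `T_{i,j}` be the rank of `S_{i,j}`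
among the entries of rows `i, …, n`. Then `T` is a good tableau: each row starts at `1` and
increases, the entries of the last column below row `i` all exceed `S_{i,k+1}`, which gives the
bound in (G1), and column strictness of `S` is (G2).

Conversely, `S` is rebuilt from `T` row by row from the bottom: if row `i` occupies the ranks
`t_1 < ⋯ < t_{k+1}` among rows `i, …, n`, an entry of rank `r` among rows `i+1, …, n` receives
rank `r + #{j : t_j ≤ r + j - 1}`. Condition (G2) makes this filling increase down the columns,
and the two constructions are inverse to each other.
-/

open Finset

section RankAfterInsert

variable (K : ℕ) (t : ℕ → ℕ)

/-- Inserting new elements at the positions `t 0 < ⋯ < t (K - 1)` moves the element at position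
`r` to position `rankAfterInsert K t r`: the `j`-th new element is placed before it exactly when
`t j ≤ r + j`. -/
def rankAfterInsert (r : ℕ) : ℕ := r + #{j ∈ range K | t j ≤ r + j}

theorem rankAfterInsert_strictMono : StrictMono (rankAfterInsert K t) := by
  intro r r' hr
  have : #{j ∈ range K | t j ≤ r + j} ≤ #{j ∈ range K | t j ≤ r' + j} :=
    card_le_card (monotone_filter_right _ fun _ _ h => h.trans (by omega))
  unfold rankAfterInsert
  omega

theorem rankAfterInsert_le_add (r : ℕ) : rankAfterInsert K t r ≤ r + K := by
  have := card_filter_le (range K) (fun j => t j ≤ r + j)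
  rw [card_range] at this
  unfold rankAfterInsert
  omega

theorem rankAfterInsert_congr {t t' : ℕ → ℕ} (h : ∀ j < K, t j = t' j) (r : ℕ) :
    rankAfterInsert K t r = rankAfterInsert K t' r := by
  unfold rankAfterInsert
  congr 2
  exact filter_congr fun j hj => by rw [h j (mem_range.1 hj)]

variable {K t}

theorem add_sub_le_of_strictMonoOn (ht : StrictMonoOn t (Set.Iio K)) {j' j : ℕ} (hj'j : j' ≤ j)
    (hj : j < K) : t j' + (j - j') ≤ t j := by
  induction j, hj'j using Nat.le_induction with
  | base => simp
  | succ j hj'j ih =>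
    have := ht (Set.mem_Iio.2 (by omega)) (Set.mem_Iio.2 hj) (Nat.lt_succ_self j)
    have := ih (by omega)
    omega

theorem lt_rankAfterInsert (ht : StrictMonoOn t (Set.Iio K)) {r j : ℕ} (hj : j < K)
    (h : t j ≤ r + j) : t j < rankAfterInsert K t r := by
  have hsub : range (j + 1) ⊆ {j ∈ range K | t j ≤ r + j} := fun j' hj' => by
    rw [mem_range] at hj'
    have := add_sub_le_of_strictMonoOn ht (j' := j') (by omega) hj
    exact mem_filter.2 ⟨mem_range.2 (by omega), by omega⟩
  have := card_le_card hsub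
  rw [card_range] at this
  unfold rankAfterInsert
  omega

theorem rankAfterInsert_lt (ht : StrictMonoOn t (Set.Iio K)) {r j : ℕ}
    (h : r + j < t j) : rankAfterInsert K t r < t j := by
  have hsub : {j ∈ range K | t j ≤ r + j} ⊆ range j := fun j' hj' => by
    rw [mem_filter, mem_range] at hj'
    rw [mem_range]
    by_contra! hj'j
    have := add_sub_le_of_strictMonoOn ht hj'j hj'.1
    omega
  have := card_le_card hsub
  rw [card_range] at this
  unfold rankAfterInsert
  omega

theorem rankAfterInsert_ne (ht : StrictMonoOn t (Set.Iio K)) {r j : ℕ} (hj : j < K) :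
    rankAfterInsert K t r ≠ t j := by
  rcases le_or_gt (t j) (r + j) with h | h
  · exact (lt_rankAfterInsert ht hj h).ne'
  · exact (rankAfterInsert_lt ht h).ne

theorem image_rankAfterInsert_union (ht : StrictMonoOn t (Set.Iio K)) {M : ℕ}
    (ht_mem : ∀ j < K, t j ∈ Icc 1 (M + K)) :
    (Icc 1 M).image (rankAfterInsert K t) ∪ (range K).image t = Icc 1 (M + K) := by
  have hsub : (Icc 1 M).image (rankAfterInsert K t) ∪ (range K).image t ⊆ Icc 1 (M + K) := by
    refine union_subset (fun v hv => ?_) (fun v hv => ?_)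
    · obtain ⟨r, hr, rfl⟩ := mem_image.1 hv
      have := (rankAfterInsert_strictMono K t).le_apply (x := r)
      have := rankAfterInsert_le_add K t r
      rw [mem_Icc] at hr ⊢
      omega
    · obtain ⟨j, hj, rfl⟩ := mem_image.1 hv
      exact ht_mem j (mem_range.1 hj)
  have hdisj : Disjoint ((Icc 1 M).image (rankAfterInsert K t)) ((range K).image t) := by
    simp only [disjoint_left, mem_image, mem_range, not_exists, not_and]
    rintro _ ⟨r, -, rfl⟩ j hj
    exact (rankAfterInsert_ne ht hj).symm
  refine eq_of_subset_of_card_le hsub ?_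
  rw [card_union_of_disjoint hdisj,
    card_image_of_injective _ (rankAfterInsert_strictMono K t).injective,
    card_image_of_injOn (ht.injOn.mono (by simp)), Nat.card_Icc, Nat.card_Icc, card_range]
  omega

end RankAfterInsert

section Rank

variable {α : Type*} (A : Finset α)

theorem card_filter_le_lt_card_filter_le_iff {β : Type*} [LinearOrder β] (f : α → β) {x y : α}
    (hy : y ∈ A) :
    #{a ∈ A | f a ≤ f x} < #{a ∈ A | f a ≤ f y} ↔ f x < f y := by
  constructor
  · intro h
    by_contra! hyx
    exact (card_le_card (monotone_filter_right _ fun a _ ha => ha.trans hyx)).not_gt h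
  · intro h
    refine card_lt_card ⟨monotone_filter_right _ fun a _ ha => ha.trans h.le, fun hsub => ?_⟩
    exact (mem_filter.1 (hsub (mem_filter.2 ⟨hy, le_rfl⟩))).2.not_gt h

theorem card_filter_le_eq_of_image_eq_Icc {f : α → ℕ} {N : ℕ} (hinj : Set.InjOn f A)
    (himage : A.image f = Icc 1 N) {x : α} (hx : x ∈ A) : #{a ∈ A | f a ≤ f x} = f x := by
  have hfx : f x ∈ Icc 1 N := himage ▸ mem_image_of_mem f hx
  have hfilter : {a ∈ A | f a ≤ f x}.image f = Icc 1 (f x) := by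
    rw [← filter_image (p := (· ≤ f x)), himage]
    ext v
    simp only [mem_filter, mem_Icc] at hfx ⊢
    omega
  rw [← card_image_of_injOn (hinj.mono (filter_subset _ A)), hfilter, Nat.card_Icc]
  omega

end Rank

section RectCells

def rectCellsFrom (n k i : ℕ) : Finset (ℕ × ℕ) := Ico i n ×ˢ range (k + 1)

variable {n k i : ℕ} {c : ℕ × ℕ}

@[simp]
theorem mem_rectCellsFrom :
    c ∈ rectCellsFrom n k i ↔ (i ≤ c.1 ∧ c.1 < n) ∧ c.2 < k + 1 := by
  simp [rectCellsFrom]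

theorem mk_mem_rectCellsFrom {a b : ℕ} (ha : i ≤ a) (han : a < n) (hb : b < k + 1) :
    (a, b) ∈ rectCellsFrom n k i :=
  mem_rectCellsFrom.2 ⟨⟨ha, han⟩, hb⟩

theorem card_rectCellsFrom : #(rectCellsFrom n k i) = (n - i) * (k + 1) := by
  simp [rectCellsFrom]

theorem rectCellsFrom_subset {i' : ℕ} (h : i ≤ i') :
    rectCellsFrom n k i' ⊆ rectCellsFrom n k i :=
  fun c hc => by simp only [mem_rectCellsFrom] at hc ⊢; omega

theorem rectCellsFrom_eq_union (hi : i < n) :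
    rectCellsFrom n k i = {i} ×ˢ range (k + 1) ∪ rectCellsFrom n k (i + 1) := by
  ext c
  simp only [mem_rectCellsFrom, mem_union, mem_product, mem_singleton, mem_range]
  omega

theorem disjoint_rectCellsFrom_succ :
    Disjoint ({i} ×ˢ range (k + 1)) (rectCellsFrom n k (i + 1)) := by
  simp only [disjoint_left, mem_product, mem_singleton, mem_rectCellsFrom]
  omega

theorem isCell_rect_iff :
    IsCell (RectShape n (k + 1)) (fun _ => 0) c ↔ c ∈ rectCellsFrom n k 0 := by
  simp only [IsCell, RectShape, mem_rectCellsFrom]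
  split_ifs <;> omega

end RectCells

namespace GoodTableau

variable {n k : ℕ} (T : GoodTableau n k) {i j : ℕ} {c c' : ℕ × ℕ}

def row (i j : ℕ) : ℕ :=
  if h : i < n ∧ j < k + 1 then T.entry ⟨i, h.1⟩ ⟨j, h.2⟩ else 0

theorem row_of_lt (hi : i < n) (hj : j < k + 1) : T.row i j = T.entry ⟨i, hi⟩ ⟨j, hj⟩ :=
  dif_pos ⟨hi, hj⟩

theorem row_strictMonoOn (hi : i < n) : StrictMonoOn (T.row i) (Set.Iio (k + 1)) :=
  fun a ha b hb hab => by
    rw [T.row_of_lt hi ha, T.row_of_lt hi hb]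
    exact T.g1_mono _ (Fin.mk_lt_mk.2 hab)

theorem row_mem_Icc (hi : i < n) (hj : j < k + 1) : T.row i j ∈ Icc 1 ((n - i) * (k + 1)) := by
  have hfirst : T.entry ⟨i, hi⟩ 0 ≤ T.entry ⟨i, hi⟩ ⟨j, hj⟩ :=
    (T.g1_mono _).monotone (Fin.zero_le _)
  have hlast : T.entry ⟨i, hi⟩ ⟨j, hj⟩ ≤ T.entry ⟨i, hi⟩ (Fin.last k) :=
    (T.g1_mono _).monotone (Fin.le_last _)
  have h1 : T.entry ⟨i, hi⟩ 0 = 1 := T.g1_first ⟨i, hi⟩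
  have hk : T.entry ⟨i, hi⟩ (Fin.last k) ≤ (n - i) * k + 1 := T.g1_last ⟨i, hi⟩
  have : (n - i) * (k + 1) = (n - i) * k + (n - i) := by ring
  rw [T.row_of_lt hi hj, mem_Icc]
  omega

theorem row_le_row_succ_add (hi : i + 1 < n) (hj : j < k + 1) :
    T.row i j ≤ T.row (i + 1) j + j := by
  rw [T.row_of_lt (by omega) hj, T.row_of_lt hi hj]
  exact T.g2 i hi ⟨j, hj⟩

def fillFrom (i : ℕ) (c : ℕ × ℕ) : ℕ :=
  if i < c.1 then rankAfterInsert (k + 1) (T.row i) (fillFrom (i + 1) c) else T.row c.1 c.2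
termination_by c.1 - i

theorem fillFrom_of_lt (h : i < c.1) :
    T.fillFrom i c = rankAfterInsert (k + 1) (T.row i) (T.fillFrom (i + 1) c) := by
  rw [fillFrom, if_pos h]

theorem fillFrom_self : T.fillFrom i (i, j) = T.row i j := by
  rw [fillFrom, if_neg (lt_irrefl i)]

theorem fillFrom_lt_fillFrom_iff {i' : ℕ} (hii' : i ≤ i') (hc : i' ≤ c.1)
    (hc' : i' ≤ c'.1) :
    T.fillFrom i c < T.fillFrom i c' ↔ T.fillFrom i' c < T.fillFrom i' c' := by
  induction i', hii' using Nat.le_induction with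
  | base => rfl
  | succ i' hii' ih =>
    rw [ih (by omega) (by omega), T.fillFrom_of_lt (c := c) (by omega),
      T.fillFrom_of_lt (c := c') (by omega)]
    exact (rankAfterInsert_strictMono _ _).lt_iff_lt

theorem image_fillFrom (hi : i ≤ n) :
    (rectCellsFrom n k i).image (T.fillFrom i) = Icc 1 ((n - i) * (k + 1)) := by
  induction hi using Nat.decreasingInduction with
  | self => simp [rectCellsFrom]
  | of_succ i hi ih =>
    have hrow :
        ({i} ×ˢ range (k + 1)).image (T.fillFrom i) = (range (k + 1)).image (T.row i) := by
      rw [singleton_product, map_eq_image, image_image]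
      exact image_congr fun j _ => T.fillFrom_self
    have hbelow : (rectCellsFrom n k (i + 1)).image (T.fillFrom i) =
        (Icc 1 ((n - (i + 1)) * (k + 1))).image (rankAfterInsert (k + 1) (T.row i)) := by
      rw [← ih, image_image]
      exact image_congr fun c hc => T.fillFrom_of_lt (mem_rectCellsFrom.1 hc).1.1
    have hM : (n - (i + 1)) * (k + 1) + (k + 1) = (n - i) * (k + 1) := by
      rw [← Nat.succ_mul]; congr 1; omega
    rw [rectCellsFrom_eq_union hi, image_union, hrow, hbelow, union_comm, ← hM]
    exact image_rankAfterInsert_union (T.row_strictMonoOn hi)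
      fun j hj => hM ▸ T.row_mem_Icc hi hj

theorem injOn_fillFrom (hi : i ≤ n) : Set.InjOn (T.fillFrom i) (rectCellsFrom n k i) := by
  apply injOn_of_card_image_eq
  rw [T.image_fillFrom hi, card_rectCellsFrom, Nat.card_Icc, Nat.add_sub_cancel]

theorem fillFrom_zero_lt_of_row {j' : ℕ} (hi : i < n) (hj' : j' < k + 1) (h : j < j') :
    T.fillFrom 0 (i, j) < T.fillFrom 0 (i, j') := by
  rw [T.fillFrom_lt_fillFrom_iff (Nat.zero_le i) le_rfl le_rfl, T.fillFrom_self, T.fillFrom_self]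
  exact T.row_strictMonoOn hi (Set.mem_Iio.2 (by omega)) (Set.mem_Iio.2 hj') h

theorem fillFrom_zero_lt_fillFrom_zero_succ (hi : i + 1 < n) (hj : j < k + 1) :
    T.fillFrom 0 (i, j) < T.fillFrom 0 (i + 1, j) := by
  rw [T.fillFrom_lt_fillFrom_iff (Nat.zero_le i) le_rfl (Nat.le_succ i), T.fillFrom_self,
    T.fillFrom_of_lt (Nat.lt_succ_self i), T.fillFrom_self]
  exact lt_rankAfterInsert (T.row_strictMonoOn (by omega)) hj (T.row_le_row_succ_add hi hj)

theorem fillFrom_zero_lt_of_col {i' : ℕ} (hi' : i' < n) (hj : j < k + 1) (h : i < i') :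
    T.fillFrom 0 (i, j) < T.fillFrom 0 (i', j) := by
  have : StrictMonoOn (fun i => T.fillFrom 0 (i, j)) (Set.Iio n) :=
    strictMonoOn_of_lt_add_one Set.ordConnected_Iio
      fun i _ _ hi => T.fillFrom_zero_lt_fillFrom_zero_succ (Set.mem_Iio.1 hi) hj
  exact this (Set.mem_Iio.2 (by omega)) (Set.mem_Iio.2 hi') h

theorem fillFrom_zero_mem_Icc (hc : c ∈ rectCellsFrom n k 0) :
    T.fillFrom 0 c ∈ Icc 1 (n * (k + 1)) := by
  have himage := T.image_fillFrom (Nat.zero_le n)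
  rw [Nat.sub_zero] at himage
  exact himage ▸ mem_image_of_mem (T.fillFrom 0) hc

def toSYT : SkewSYT (RectShape n (k + 1)) (fun _ => 0) where
  entry c := if c ∈ rectCellsFrom n k 0 then T.fillFrom 0 c else 0
  entry_outside c hc := if_neg (mt isCell_rect_iff.2 hc)
  entry_pos c hc := by
    rw [isCell_rect_iff] at hc
    rw [if_pos hc]
    exact (mem_Icc.1 (T.fillFrom_zero_mem_Icc hc)).1
  entry_inj c c' hc hc' h := by
    rw [isCell_rect_iff] at hc hc'
    rw [if_pos hc, if_pos hc'] at h
    exact T.injOn_fillFrom (Nat.zero_le n) hc hc' h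
  entry_init c hc v hv hvc := by
    rw [isCell_rect_iff] at hc
    rw [if_pos hc] at hvc
    have hv' : v ∈ (rectCellsFrom n k 0).image (T.fillFrom 0) := by
      rw [T.image_fillFrom (Nat.zero_le n), Nat.sub_zero, mem_Icc]
      have := mem_Icc.1 (T.fillFrom_zero_mem_Icc hc)
      omega
    obtain ⟨c', hc', rfl⟩ := mem_image.1 hv'
    exact ⟨c', isCell_rect_iff.2 hc', if_pos hc'⟩
  row_strict i j j' hc hc' h := by
    rw [isCell_rect_iff] at hc hc'
    rw [if_pos hc, if_pos hc']
    rw [mem_rectCellsFrom] at hc'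
    exact T.fillFrom_zero_lt_of_row hc'.1.2 hc'.2 h
  col_strict i i' j hc hc' h := by
    rw [isCell_rect_iff] at hc hc'
    rw [if_pos hc, if_pos hc']
    rw [mem_rectCellsFrom] at hc'
    exact T.fillFrom_zero_lt_of_col hc'.1.2 hc'.2 h

theorem toSYT_entry (hc : c ∈ rectCellsFrom n k 0) : T.toSYT.entry c = T.fillFrom 0 c :=
  if_pos hc

end GoodTableau

namespace SkewSYT

variable {n k : ℕ} (S : SkewSYT (RectShape n (k + 1)) (fun _ => 0))
  {i j : ℕ} {c c' : ℕ × ℕ}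

theorem entry_injOn : Set.InjOn S.entry (rectCellsFrom n k 0) := fun c hc c' hc' h =>
  S.entry_inj c c' (isCell_rect_iff.2 hc) (isCell_rect_iff.2 hc') h

theorem entry_lt_of_row {j' : ℕ} (hi : i < n) (hj' : j' < k + 1) (h : j < j') :
    S.entry (i, j) < S.entry (i, j') :=
  S.row_strict i j j' (isCell_rect_iff.2 (mk_mem_rectCellsFrom (Nat.zero_le i) hi (by omega)))
    (isCell_rect_iff.2 (mk_mem_rectCellsFrom (Nat.zero_le i) hi hj')) h

theorem entry_lt_of_col {i' : ℕ} (hi' : i' < n) (hj : j < k + 1) (h : i < i') :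
    S.entry (i, j) < S.entry (i', j) :=
  S.col_strict i i' j (isCell_rect_iff.2 (mk_mem_rectCellsFrom (Nat.zero_le i) (by omega) hj))
    (isCell_rect_iff.2 (mk_mem_rectCellsFrom (Nat.zero_le i') hi' hj)) h

theorem entry_le_entry (hc' : c' ∈ rectCellsFrom n k 0) (h : c ≤ c') :
    S.entry c ≤ S.entry c' := by
  obtain ⟨a, b⟩ := c
  obtain ⟨a', b'⟩ := c'
  simp only [mem_rectCellsFrom] at hc'
  obtain ⟨ha, hb⟩ := Prod.mk_le_mk.1 h
  have hrow : S.entry (a, b) ≤ S.entry (a, b') := by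
    rcases hb.eq_or_lt with rfl | hlt
    · exact le_rfl
    · exact (S.entry_lt_of_row (by omega) hc'.2 hlt).le
  have hcol : S.entry (a, b') ≤ S.entry (a', b') := by
    rcases ha.eq_or_lt with rfl | hlt
    · exact le_rfl
    · exact (S.entry_lt_of_col hc'.1.2 hc'.2 hlt).le
  exact hrow.trans hcol

def rankFrom (i : ℕ) (c : ℕ × ℕ) : ℕ :=
  #{c' ∈ rectCellsFrom n k i | S.entry c' ≤ S.entry c}

theorem rankFrom_lt_rankFrom_iff (hc : c ∈ rectCellsFrom n k i) :
    S.rankFrom i c' < S.rankFrom i c ↔ S.entry c' < S.entry c :=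
  card_filter_le_lt_card_filter_le_iff _ _ hc

theorem rankFrom_zero (hc : c ∈ rectCellsFrom n k 0) : S.rankFrom 0 c = S.entry c := by
  have himage : {c' ∈ rectCellsFrom n k 0 | S.entry c' ≤ S.entry c}.image S.entry =
      Icc 1 (S.entry c) := by
    ext v
    simp only [mem_image, mem_filter, mem_Icc]
    constructor
    · rintro ⟨c', ⟨hc', hle⟩, rfl⟩
      exact ⟨S.entry_pos c' (isCell_rect_iff.2 hc'), hle⟩
    · rintro ⟨hv, hle⟩
      rcases hle.eq_or_lt with rfl | hlt
      · exact ⟨c, ⟨hc, le_rfl⟩, rfl⟩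
      · obtain ⟨c', hc', rfl⟩ := S.entry_init c (isCell_rect_iff.2 hc) v hv hlt
        exact ⟨c', ⟨isCell_rect_iff.1 hc', hlt.le⟩, rfl⟩
  rw [rankFrom, ← card_image_of_injOn (S.entry_injOn.mono (filter_subset _ _)), himage,
    Nat.card_Icc, Nat.add_sub_cancel]

theorem rankFrom_eq_add (hi : i < n) (c : ℕ × ℕ) :
    S.rankFrom i c =
      #{j ∈ range (k + 1) | S.entry (i, j) ≤ S.entry c} + S.rankFrom (i + 1) c := by
  rw [rankFrom, rectCellsFrom_eq_union hi, filter_union,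
    card_union_of_disjoint (disjoint_filter_filter disjoint_rectCellsFrom_succ),
    singleton_product, filter_map, card_map]
  rfl

theorem rankFrom_self (hi : i < n) (hj : j < k + 1) :
    S.rankFrom i (i, j) = j + 1 + S.rankFrom (i + 1) (i, j) := by
  have hrow : {j' ∈ range (k + 1) | S.entry (i, j') ≤ S.entry (i, j)} = range (j + 1) := by
    ext j'
    simp only [mem_filter, mem_range]
    constructor
    · rintro ⟨hj', hle⟩
      by_contra! hjj'
      exact hle.not_gt (S.entry_lt_of_row hi hj' (by omega))
    · intro hj'
      exact ⟨by omega, S.entry_le_entry (mk_mem_rectCellsFrom (Nat.zero_le i) hi hj)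
        (Prod.mk_le_mk.2 ⟨le_rfl, by omega⟩)⟩
  rw [S.rankFrom_eq_add hi, hrow, card_range]

theorem entry_le_iff_rankFrom_le (hi : i < n) (hc : c ∈ rectCellsFrom n k (i + 1))
    (hj : j < k + 1) :
    S.entry (i, j) ≤ S.entry c ↔ S.rankFrom i (i, j) ≤ S.rankFrom (i + 1) c + j := by
  have hne : S.entry (i, j) ≠ S.entry c := fun h => by
    have := congrArg Prod.fst (S.entry_injOn (mk_mem_rectCellsFrom (Nat.zero_le i) hi hj)
      (rectCellsFrom_subset (Nat.zero_le _) hc) h)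
    simp only [mem_rectCellsFrom] at hc
    omega
  rw [le_iff_lt_or_eq, or_iff_left hne, ← S.rankFrom_lt_rankFrom_iff hc, S.rankFrom_self hi hj]
  omega

theorem rankFrom_eq_rankAfterInsert (hi : i < n) (hc : c ∈ rectCellsFrom n k (i + 1)) :
    S.rankFrom i c =
      rankAfterInsert (k + 1) (fun j => S.rankFrom i (i, j)) (S.rankFrom (i + 1) c) := by
  rw [S.rankFrom_eq_add hi, rankAfterInsert, add_comm]
  congr 2
  exact filter_congr fun j hj => S.entry_le_iff_rankFrom_le hi hc (mem_range.1 hj)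

theorem rankFrom_last_le (hi : i < n) :
    S.rankFrom i (i, k) ≤ (n - i) * k + 1 := by
  set below := Ico (i + 1) n ×ˢ {k}
  have hsub : {c' ∈ rectCellsFrom n k i | S.entry c' ≤ S.entry (i, k)} ⊆
      rectCellsFrom n k i \ below := by
    intro c' hc'
    rw [mem_filter] at hc'
    refine mem_sdiff.2 ⟨hc'.1, fun hbelow => ?_⟩
    obtain ⟨c1, c2⟩ := c'
    simp only [below, mem_product, mem_Ico, mem_singleton] at hbelow
    obtain ⟨⟨h1, h2⟩, hk⟩ := hbelow
    rw [hk] at hc'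
    exact hc'.2.not_gt (S.entry_lt_of_col h2 (Nat.lt_succ_self k) h1)
  have hcard := card_le_card hsub
  have hbelow : below ⊆ rectCellsFrom n k i := fun c hc => by
    simp only [below, mem_product, mem_Ico, mem_singleton] at hc
    simp only [mem_rectCellsFrom]
    omega
  rw [card_sdiff_of_subset hbelow, card_rectCellsFrom,
    card_product, Nat.card_Ico, card_singleton] at hcard
  have : (n - i) * (k + 1) = (n - i) * k + (n - i) := by ring
  unfold rankFrom
  omega

def toGood : GoodTableau n k where
  entry i j := S.rankFrom i (i, j)
  g1_first i := by
    rw [rankFrom, card_eq_one]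
    refine ⟨((i : ℕ), 0),
      eq_singleton_iff_unique_mem.2 ⟨mem_filter.2 ⟨by simp, le_rfl⟩, fun c' hc' => ?_⟩⟩
    rw [mem_filter] at hc'
    have hc'0 := rectCellsFrom_subset (Nat.zero_le i) hc'.1
    refine S.entry_injOn hc'0 (mk_mem_rectCellsFrom (Nat.zero_le i) i.2 k.succ_pos)
      (hc'.2.antisymm ?_)
    exact S.entry_le_entry hc'0 ⟨(mem_rectCellsFrom.1 hc'.1).1.1, Nat.zero_le _⟩
  g1_mono i j j' h :=
    (S.rankFrom_lt_rankFrom_iff (mk_mem_rectCellsFrom le_rfl i.2 j'.2)).2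
      (S.entry_lt_of_row i.2 j'.2 h)
  g1_last i := S.rankFrom_last_le i.2
  g2 i hi j := by
    have := S.rankFrom_self (i := i) (by omega) j.2
    have := (S.rankFrom_lt_rankFrom_iff (i := i + 1) (c' := (i, j)) (c := (i + 1, j))
      (mk_mem_rectCellsFrom le_rfl hi j.2)).2 (S.entry_lt_of_col hi j.2 (Nat.lt_succ_self i))
    change S.rankFrom i (i, j) ≤ S.rankFrom (i + 1) (i + 1, j) + j
    omega

theorem rankFrom_eq_fillFrom (hc : c ∈ rectCellsFrom n k i) :
    S.rankFrom i c = S.toGood.fillFrom i c := by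
  rw [mem_rectCellsFrom] at hc
  induction hc.1.1 using Nat.decreasingInduction with
  | self => rw [GoodTableau.fillFrom_self, GoodTableau.row_of_lt _ hc.1.2 hc.2]; rfl
  | of_succ i hi ih =>
    rw [S.rankFrom_eq_rankAfterInsert (by omega) (mem_rectCellsFrom.2 ⟨⟨hi, hc.1.2⟩, hc.2⟩),
      GoodTableau.fillFrom_of_lt _ hi, ← ih ⟨⟨hi, hc.1.2⟩, hc.2⟩]
    exact rankAfterInsert_congr _ (fun j hj => (S.toGood.row_of_lt (by omega) hj).symm) _

end SkewSYT

namespace GoodTableau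

variable {n k : ℕ} (T : GoodTableau n k)

theorem entry_injective : Function.Injective (entry : GoodTableau n k → _) := by
  rintro ⟨⟩ ⟨⟩ rfl
  rfl

theorem rankFrom_toSYT {i : ℕ} {c : ℕ × ℕ} (hc : c ∈ rectCellsFrom n k i) :
    T.toSYT.rankFrom i c = T.fillFrom i c := by
  have hi : i ≤ n := by simp only [mem_rectCellsFrom] at hc; omega
  have hle : ∀ c' ∈ rectCellsFrom n k i,
      T.toSYT.entry c' ≤ T.toSYT.entry c ↔ T.fillFrom i c' ≤ T.fillFrom i c := by
    intro c' hc'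
    rw [T.toSYT_entry (rectCellsFrom_subset (Nat.zero_le i) hc'),
      T.toSYT_entry (rectCellsFrom_subset (Nat.zero_le i) hc), ← not_lt, ← not_lt,
      T.fillFrom_lt_fillFrom_iff (Nat.zero_le i) (mem_rectCellsFrom.1 hc).1.1
        (mem_rectCellsFrom.1 hc').1.1]
  rw [SkewSYT.rankFrom, filter_congr hle]
  exact card_filter_le_eq_of_image_eq_Icc _ (T.injOn_fillFrom hi) (T.image_fillFrom hi) hc

theorem toGood_toSYT : T.toSYT.toGood = T := by
  refine entry_injective (funext₂ fun i j => ?_)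
  change T.toSYT.rankFrom i (i, j) = T.entry i j
  rw [T.rankFrom_toSYT (mk_mem_rectCellsFrom le_rfl i.2 j.2), fillFrom_self, row_of_lt]

end GoodTableau

namespace SkewSYT

variable {n k : ℕ} (S : SkewSYT (RectShape n (k + 1)) (fun _ => 0))

theorem entry_injective {lam mu : ℕ → ℕ} :
    Function.Injective (entry : SkewSYT lam mu → _) := by
  rintro ⟨⟩ ⟨⟩ rfl
  rfl

theorem toSYT_toGood : S.toGood.toSYT = S := by
  refine entry_injective (funext fun c => ?_)
  by_cases hc : c ∈ rectCellsFrom n k 0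
  · rw [GoodTableau.toSYT_entry _ hc, ← S.rankFrom_eq_fillFrom hc, S.rankFrom_zero hc]
  · exact (if_neg hc).trans (S.entry_outside c (mt isCell_rect_iff.1 hc)).symm

end SkewSYT

def GoodTableau.equivRectSYT (n k : ℕ) :
    GoodTableau n k ≃ SkewSYT (RectShape n (k + 1)) (fun _ => 0) where
  toFun := GoodTableau.toSYT
  invFun := SkewSYT.toGood
  left_inv := GoodTableau.toGood_toSYT
  right_inv := SkewSYT.toSYT_toGood

theorem stmt_4_general (n k : ℕ) :
    Nat.card (GoodTableau n k) =
      Nat.card (SkewSYT (RectShape n (k + 1)) (fun _ => 0)) :=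
  Nat.card_congr (GoodTableau.equivRectSYT n k)

/-- The number of good tableaux of shape `⟨(k+1)^n⟩` equals the number of standard Young
tableaux of shape `⟨(k+1)^n⟩`. -/
theorem stmt_4 (n k : ℕ) (hn : 1 ≤ n) (hk : 1 ≤ k) :
    Nat.card (GoodTableau n k) =
      Nat.card (SkewSYT (RectShape n (k + 1)) (fun _ => 0)) :=
  stmt_4_general n k
end

section
/- For all n ≥ 1, k ≥ 1 and 0 ≤ r ≤ k−1, the number of permutations in L_{n,k;r} avoiding the monotone pattern 12⋯(k+1) equals the number of standard Young tableaux of shape ⟨k^n, r⟩; that is, |L_{n,k;r}(12⋯(k+1))| = f^{⟨k^n, r⟩}. -/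
/-!
Stacking the blocks of `w ∈ L_{n,k;r}` from the bottom up, the initial block being the short
bottom row, turns `w` into a filling of `⟨k^n, r⟩` whose reading word is `w`. Its rows increase
by (L1′). Its columns increase too: between two full rows, `w_{i,j} < w_{i+1,j}` would make
`w_{i,1} ⋯ w_{i,j} w_{i+1,j} ⋯ w_{i+1,k}` an occurrence of `12⋯(k+1)`, and above the short row
this is (L2′). Conversely, an increasing subsequence of the reading word of a standard Young
tableau moves strictly to the right at each step, so it has at most `k` letters, and (L2′) follows
by going along a row and then down a column. Finally, a standard Young tableau with `N` boxes is
the same as a bijection from its boxes onto `Fin N` that increases along rows and columns.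
-/

abbrev Cells (lam mu : ℕ → ℕ) := {c : ℕ × ℕ // IsCell lam mu c}

structure IsStandardFilling {lam mu : ℕ → ℕ} {α : Type*} [LT α] (f : Cells lam mu → α) :
    Prop where
  row_lt : ∀ i j j' (h : IsCell lam mu (i, j)) (h' : IsCell lam mu (i, j')), j < j' →
    f ⟨(i, j), h⟩ < f ⟨(i, j'), h'⟩
  col_lt : ∀ i i' j (h : IsCell lam mu (i, j)) (h' : IsCell lam mu (i', j)), i < i' →
    f ⟨(i, j), h⟩ < f ⟨(i', j), h'⟩

theorem readLT_or_readLT_of_ne {c c' : ℕ × ℕ} (h : c ≠ c') :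
    ReadLT c c' ∨ ReadLT c' c := by
  obtain ⟨i, j⟩ := c
  obtain ⟨i', j'⟩ := c'
  simp only [ne_eq, Prod.mk.injEq] at h
  simp only [ReadLT]
  omega

theorem containsPat_monoPat_iff {N m : ℕ} {α : Type*} [LinearOrder α] {w : Fin N → α} :
    ContainsPat w (MonoPat m) ↔ ∃ f : Fin m → Fin N, StrictMono f ∧ StrictMono (w ∘ f) :=
  ⟨fun ⟨f, hf, hw⟩ => ⟨f, hf, fun a b hab => (hw a b).1 hab⟩,
    fun ⟨f, hf, hw⟩ => ⟨f, hf, fun _ _ => hw.lt_iff_lt.symm⟩⟩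

namespace IsStandardFilling

variable {lam mu : ℕ → ℕ} {α : Type*} [Preorder α] {f : Cells lam mu → α}

theorem of_lt_succ (hlam : Antitone lam) (hmu : Antitone mu)
    (hrow : ∀ i j (h : IsCell lam mu (i, j)) (h' : IsCell lam mu (i, j + 1)),
      f ⟨(i, j), h⟩ < f ⟨(i, j + 1), h'⟩)
    (hcol : ∀ i j (h : IsCell lam mu (i, j)) (h' : IsCell lam mu (i + 1, j)),
      f ⟨(i, j), h⟩ < f ⟨(i + 1, j), h'⟩) :
    IsStandardFilling f where
  row_lt i j j' h h' hj := by
    induction j', hj using Nat.le_induction with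
    | base => exact hrow i j h h'
    | succ j' hjj' ih =>
      have hm : IsCell lam mu (i, j') :=
        ⟨h.1.trans (show j ≤ j' by omega), (Nat.lt_succ_self j').trans h'.2⟩
      exact (ih hm).trans (hrow i j' hm h')
  col_lt i i' j h h' hi := by
    induction i', hi using Nat.le_induction with
    | base => exact hcol i j h h'
    | succ i' hii' ih =>
      have hm : IsCell lam mu (i', j) :=
        ⟨(hmu (by omega : i ≤ i')).trans h.1, h'.2.trans_le (hlam (Nat.le_succ i'))⟩
      exact (ih hm).trans (hcol i' j hm h')

theorem col_lt_of_readLT (hf : IsStandardFilling f) (hlam : Antitone lam) {c c' : Cells lam mu}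
    (hread : ReadLT c.1 c'.1) (hlt : f c < f c') : c.1.2 < c'.1.2 := by
  obtain ⟨⟨i, j⟩, hc⟩ := c
  obtain ⟨⟨i', j'⟩, hc'⟩ := c'
  rcases hread with hi | ⟨-, hj⟩
  -- If `c'` lies in a higher row and weakly left of `c`, then `f c' ≤ f (i', j) < f c`.
  · by_contra! hj
    have hm : IsCell lam mu (i', j) := ⟨hc'.1.trans hj, hc.2.trans_le (hlam hi.le)⟩
    have hle : f ⟨(i', j'), hc'⟩ ≤ f ⟨(i', j), hm⟩ := by
      rcases hj.lt_or_eq with hj | rfl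
      · exact (hf.row_lt i' j' j hc' hm hj).le
      · exact le_rfl
    exact lt_asymm hlt (hle.trans_lt (hf.col_lt i' i j hm hc hi))
  · exact hj

theorem card_le_of_readLT_chain (hf : IsStandardFilling f) (hlam : Antitone lam) {k m : ℕ}
    (hk : ∀ i, lam i ≤ k) (c : Fin m → Cells lam mu)
    (hread : ∀ a b, a < b → ReadLT (c a).1 (c b).1) (hc : StrictMono (f ∘ c)) : m ≤ k := by
  have hcol : StrictMono fun a => (c a).1.2 := fun a b hab =>
    hf.col_lt_of_readLT hlam (hread a b hab) (hc hab)
  simpa using Fintype.card_le_of_injective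
    (fun a => (⟨(c a).1.2, (c a).2.2.trans_le (hk _)⟩ : Fin k))
    (fun a b h => hcol.injective (congrArg Fin.val h))

end IsStandardFilling

namespace SkewSYT

variable {lam mu : ℕ → ℕ} {N : ℕ}

theorem ext {T T' : SkewSYT lam mu} (h : T.entry = T'.entry) : T = T' := by
  cases T; cases T'; cases h; rfl

theorem entry_le_card [Finite (Cells lam mu)] (T : SkewSYT lam mu) {c : ℕ × ℕ}
    (hc : IsCell lam mu c) : T.entry c ≤ Nat.card (Cells lam mu) := by
  have hval : ∀ v : Fin (T.entry c), ∃ c' : Cells lam mu, T.entry c'.1 = v + 1 := by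
    intro v
    rcases (Nat.succ_le_of_lt v.isLt).lt_or_eq with hv | hv
    · obtain ⟨c', hc', he⟩ := T.entry_init c hc (v + 1) (by omega) hv
      exact ⟨⟨c', hc'⟩, he⟩
    · exact ⟨⟨c, hc⟩, hv.symm⟩
  choose g hg using hval
  have hinj : Function.Injective g := fun v v' h => Fin.ext <| by
    have := hg v; rw [h, hg v'] at this; omega
  simpa using Nat.card_le_card_of_injective g hinj

open Classical in
noncomputable def ofStandardFilling (σ : Cells lam mu ≃ Fin N) (hσ : IsStandardFilling σ) :
    SkewSYT lam mu where
  entry c := if h : IsCell lam mu c then σ ⟨c, h⟩ + 1 else 0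
  entry_outside c h := dif_neg h
  entry_pos c h := by simp [h]
  entry_inj c c' h h' he := by
    simp only [dif_pos h, dif_pos h', add_left_inj, Fin.val_inj] at he
    exact congrArg Subtype.val (σ.injective he)
  entry_init c h v hv hvc := by
    rw [dif_pos h] at hvc
    refine ⟨σ.symm ⟨v - 1, by omega⟩, (σ.symm _).2, ?_⟩
    simp only [Subtype.coe_eta, (σ.symm _).2, dif_pos, Equiv.apply_symm_apply]
    omega
  row_strict i j j' h h' hj := by simpa [h, h'] using hσ.row_lt i j j' h h' hj
  col_strict i i' j h h' hi := by simpa [h, h'] using hσ.col_lt i i' j h h' hi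

variable [Finite (Cells lam mu)]

noncomputable def fillingEquiv (T : SkewSYT lam mu) (hN : Nat.card (Cells lam mu) = N) :
    Cells lam mu ≃ Fin N :=
  Equiv.ofBijective
    (fun c => ⟨T.entry c.1 - 1, by
      have := T.entry_pos c.1 c.2; have := T.entry_le_card c.2; omega⟩)
    (Function.Injective.bijective_of_nat_card_le
      (fun c c' h => Subtype.ext <| T.entry_inj _ _ c.2 c'.2 <| by
        have := T.entry_pos c.1 c.2; have := T.entry_pos c'.1 c'.2
        simp only [Fin.mk.injEq] at h; omega)
      (by simp [hN]))

theorem fillingEquiv_apply (T : SkewSYT lam mu) (hN : Nat.card (Cells lam mu) = N)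
    (c : Cells lam mu) : (T.fillingEquiv hN c : ℕ) = T.entry c.1 - 1 := rfl

theorem isStandardFilling_fillingEquiv (T : SkewSYT lam mu)
    (hN : Nat.card (Cells lam mu) = N) : IsStandardFilling (T.fillingEquiv hN) where
  row_lt i j j' h h' hj := by
    have := T.entry_pos _ h; have := T.row_strict i j j' h h' hj
    show T.entry (i, j) - 1 < T.entry (i, j') - 1; omega
  col_lt i i' j h h' hi := by
    have := T.entry_pos _ h; have := T.col_strict i i' j h h' hi
    show T.entry (i, j) - 1 < T.entry (i', j) - 1; omega

noncomputable def equivStandardFilling (hN : Nat.card (Cells lam mu) = N) :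
    SkewSYT lam mu ≃ {σ : Cells lam mu ≃ Fin N // IsStandardFilling σ} where
  toFun T := ⟨T.fillingEquiv hN, T.isStandardFilling_fillingEquiv hN⟩
  invFun σ := ofStandardFilling σ.1 σ.2
  left_inv T := ext <| funext fun c => by
    by_cases h : IsCell lam mu c
    · have := T.entry_pos c h
      simp only [ofStandardFilling, dif_pos h, fillingEquiv_apply]
      omega
    · simp only [ofStandardFilling, dif_neg h, T.entry_outside c h]
  right_inv σ := Subtype.ext <| Equiv.ext fun c => Fin.ext <| by
    simp [fillingEquiv_apply, ofStandardFilling, c.2]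

end SkewSYT

/-- The partition `⟨k^n, r⟩`. -/
def shape (n k r : ℕ) : ℕ → ℕ := fun i => if i < n then k else if i = n then r else 0

section Shape

variable {n k r : ℕ}

theorem isCell_shape_iff {i j : ℕ} :
    IsCell (shape n k r) (fun _ => 0) (i, j) ↔ i < n ∧ j < k ∨ i = n ∧ j < r := by
  simp only [IsCell, shape, zero_le, true_and]
  split_ifs <;> omega

theorem antitone_shape (hr : r ≤ k) : Antitone (shape n k r) := fun i i' _ => by
  simp only [shape]
  split_ifs <;> omega

theorem shape_le (hr : r ≤ k) (i : ℕ) : shape n k r i ≤ k := by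
  simp only [shape]
  split_ifs <;> omega

/-- Row `i < n` of `⟨k^n, r⟩` is read off block `n - 1 - i` of a word of `L_{n,k;r}`, and the
short row `n` off its initial block. -/
def readingPos (n k r : ℕ) (c : ℕ × ℕ) : ℕ :=
  if c.1 < n then r + ((n - 1 - c.1) * k + c.2) else c.2

theorem readingPos_lt {c : ℕ × ℕ} (hc : IsCell (shape n k r) (fun _ => 0) c) :
    readingPos n k r c < n * k + r := by
  obtain ⟨i, j⟩ := c
  rcases isCell_shape_iff.1 hc with ⟨hi, hj⟩ | ⟨rfl, hj⟩
  · have : (n - 1 - i + 1) * k ≤ n * k := Nat.mul_le_mul_right k (by omega)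
    simp only [readingPos, if_pos hi, add_one_mul] at this ⊢
    omega
  · simp only [readingPos, lt_irrefl, if_false]
    omega

theorem readingPos_lt_readingPos {c c' : ℕ × ℕ} (hc : IsCell (shape n k r) (fun _ => 0) c)
    (hc' : IsCell (shape n k r) (fun _ => 0) c') (h : ReadLT c c') :
    readingPos n k r c < readingPos n k r c' := by
  obtain ⟨i, j⟩ := c
  obtain ⟨i', j'⟩ := c'
  rw [isCell_shape_iff] at hc hc'
  rcases h with hi | ⟨rfl, hj⟩
  · have hi' : i' < n := by omega
    simp only [readingPos, if_pos hi']
    by_cases hi : i < n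
    · have : (n - 1 - i + 1) * k ≤ (n - 1 - i') * k := Nat.mul_le_mul_right k (by omega)
      simp only [if_pos hi, add_one_mul] at this ⊢
      omega
    · simp only [if_neg hi]
      omega
  · simp only [readingPos]
    split_ifs <;> omega

theorem readingPos_lt_iff {c c' : ℕ × ℕ} (hc : IsCell (shape n k r) (fun _ => 0) c)
    (hc' : IsCell (shape n k r) (fun _ => 0) c') :
    readingPos n k r c < readingPos n k r c' ↔ ReadLT c c' := by
  refine ⟨fun h => ?_, readingPos_lt_readingPos hc hc'⟩
  rcases eq_or_ne c c' with rfl | hne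
  · exact absurd h (lt_irrefl _)
  · exact (readLT_or_readLT_of_ne hne).resolve_right fun h' =>
      (readingPos_lt_readingPos hc' hc h').not_gt h

theorem eq_of_readingPos_eq {c c' : ℕ × ℕ} (hc : IsCell (shape n k r) (fun _ => 0) c)
    (hc' : IsCell (shape n k r) (fun _ => 0) c') (h : readingPos n k r c = readingPos n k r c') :
    c = c' := by
  by_contra hne
  rcases readLT_or_readLT_of_ne hne with h' | h'
  · exact (readingPos_lt_readingPos hc hc' h').ne h
  · exact (readingPos_lt_readingPos hc' hc h').ne h.symm

theorem exists_readingPos_eq {p : ℕ} (hp : p < n * k + r) :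
    ∃ c, IsCell (shape n k r) (fun _ => 0) c ∧ readingPos n k r c = p := by
  by_cases hpr : p < r
  · exact ⟨(n, p), isCell_shape_iff.2 (.inr ⟨rfl, hpr⟩), by simp [readingPos]⟩
  · have hk : 0 < k := Nat.pos_of_ne_zero fun hk => by simp [hk] at hp; omega
    have hb : (p - r) / k < n := Nat.div_lt_of_lt_mul (by rw [Nat.mul_comm k n]; omega)
    have hdm := Nat.div_add_mod' (p - r) k
    have hj := Nat.mod_lt (p - r) hk
    generalize (p - r) / k = b at hb hdm
    generalize (p - r) % k = j at hdm hj
    refine ⟨(n - 1 - b, j), isCell_shape_iff.2 (.inl ⟨by omega, hj⟩), ?_⟩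
    simp only [readingPos, show n - 1 - b < n by omega, show n - 1 - (n - 1 - b) = b by omega,
      if_true]
    omega

variable (n k r) in
noncomputable def readingEquiv : Cells (shape n k r) (fun _ => 0) ≃ Fin (n * k + r) :=
  Equiv.ofBijective (fun c => ⟨readingPos n k r c.1, readingPos_lt c.2⟩)
    ⟨fun c c' h => Subtype.ext (eq_of_readingPos_eq c.2 c'.2 (congrArg Fin.val h)),
      fun p => let ⟨c, hc, hcp⟩ := exists_readingPos_eq p.2; ⟨⟨c, hc⟩, Fin.ext hcp⟩⟩

theorem readingEquiv_lt_iff {c c' : Cells (shape n k r) (fun _ => 0)} :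
    readingEquiv n k r c < readingEquiv n k r c' ↔ ReadLT c.1 c'.1 :=
  readingPos_lt_iff c.2 c'.2

theorem readingEquiv_of_lt {i j : ℕ} (h : IsCell (shape n k r) (fun _ => 0) (i, j))
    (hi : i < n) (hj : j < k) :
    readingEquiv n k r ⟨(i, j), h⟩ = LrPos n k r (n - 1 - i) j (by omega) hj :=
  Fin.ext (by simp [readingEquiv, readingPos, LrPos, hi])

theorem readingEquiv_last {j : ℕ} (h : IsCell (shape n k r) (fun _ => 0) (n, j)) (hj : j < r) :
    readingEquiv n k r ⟨(n, j), h⟩ = ⟨j, by omega⟩ :=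
  Fin.ext (by simp [readingEquiv, readingPos])

theorem readingEquiv_of_succ_eq {i j : ℕ} (h : IsCell (shape n k r) (fun _ => 0) (i, j))
    (hi : i + 1 = n) (hlt : r + j < n * k + r) :
    readingEquiv n k r ⟨(i, j), h⟩ = ⟨r + j, hlt⟩ :=
  Fin.ext (by simp [readingEquiv, readingPos, show i < n by omega, show n - 1 - i = 0 by omega])

theorem LrPos_eq_readingEquiv {b j : ℕ} (hb : b < n) (hj : j < k) :
    LrPos n k r b j hb hj =
      readingEquiv n k r ⟨(n - 1 - b, j), isCell_shape_iff.2 (.inl ⟨by omega, hj⟩)⟩ :=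
  Fin.ext (by simp [readingEquiv, readingPos, LrPos, show n - 1 - b < n by omega,
    show n - 1 - (n - 1 - b) = b by omega])

theorem containsPat_monoPat_iff_readLT {α : Type*} [LinearOrder α] {w : Fin (n * k + r) → α}
    {m : ℕ} :
    ContainsPat w (MonoPat m) ↔ ∃ c : Fin m → Cells (shape n k r) (fun _ => 0),
      (∀ a b, a < b → ReadLT (c a).1 (c b).1) ∧
        StrictMono fun a => w (readingEquiv n k r (c a)) := by
  rw [containsPat_monoPat_iff]
  constructor
  · rintro ⟨f, hf, hwf⟩
    refine ⟨(readingEquiv n k r).symm ∘ f, fun a b hab => ?_, ?_⟩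
    · rw [← readingEquiv_lt_iff]
      simpa using hf hab
    · simpa [Function.comp_def] using hwf
  · rintro ⟨c, hc, hwc⟩
    exact ⟨readingEquiv n k r ∘ c, fun a b hab => readingEquiv_lt_iff.2 (hc a b hab), hwc⟩

end Shape

section ReadingWord

variable {n k r : ℕ} {w : Equiv.Perm (Fin (n * k + r))}

theorem MemLr.lt_right (hw : MemLr n k r w) {i j : ℕ}
    (h : IsCell (shape n k r) (fun _ => 0) (i, j))
    (h' : IsCell (shape n k r) (fun _ => 0) (i, j + 1)) :
    w (readingEquiv n k r ⟨(i, j), h⟩) < w (readingEquiv n k r ⟨(i, j + 1), h'⟩) := by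
  rcases isCell_shape_iff.1 h' with ⟨hi, hj⟩ | ⟨rfl, hj⟩
  · rw [readingEquiv_of_lt h hi (by omega), readingEquiv_of_lt h' hi hj]
    exact hw.2.1 _ _ _ hj
  · rw [readingEquiv_last h (by omega), readingEquiv_last h' hj]
    exact hw.1 j hj

theorem MemLr.containsPat_of_below_lt (hw : MemLr n k r w) {i j : ℕ} (hi : i + 1 < n)
    (hj : j < k) (h : IsCell (shape n k r) (fun _ => 0) (i, j))
    (h' : IsCell (shape n k r) (fun _ => 0) (i + 1, j))
    (hlt : w (readingEquiv n k r ⟨(i + 1, j), h'⟩) < w (readingEquiv n k r ⟨(i, j), h⟩)) :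
    ContainsPat (⇑w) (MonoPat (k + 1)) := by
  -- Rows `i + 1` and `i` are read consecutively, so `(i + 1, 0), …, (i + 1, j), (i, j), …,
  -- (i, k - 1)` carry an increasing subsequence of length `k + 1`.
  let g : ℕ → ℕ × ℕ := fun t => if t ≤ j then (i + 1, t) else (i, t - 1)
  have hg : ∀ t ≤ k, IsCell (shape n k r) (fun _ => 0) (g t) := fun t ht => by
    simp only [g]
    split_ifs <;> exact isCell_shape_iff.2 (.inl ⟨by omega, by omega⟩)
  refine containsPat_monoPat_iff_readLT.2 ⟨fun a => ⟨g a, hg a (by omega)⟩, fun a b hab => ?_,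
    Fin.strictMono_iff_lt_succ.2 fun t => ?_⟩
  · have : (a : ℕ) < b := hab
    simp only [g, ReadLT]
    split_ifs <;> dsimp only <;> omega
  · simp only [Fin.val_castSucc, Fin.val_succ, g]
    rcases lt_trichotomy (t : ℕ) j with ht | rfl | ht
    · simp only [show (t : ℕ) ≤ j by omega, show (t : ℕ) + 1 ≤ j by omega, if_true]
      exact hw.lt_right _ _
    · simp only [le_refl, if_true, show ¬ (t : ℕ) + 1 ≤ t by omega, if_false,
        Nat.add_sub_cancel]
      exact hlt
    · obtain ⟨s, hs⟩ : ∃ s, (t : ℕ) = s + 1 := ⟨t - 1, by omega⟩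
      simp only [hs, show ¬ s + 1 ≤ j by omega, show ¬ s + 1 + 1 ≤ j by omega, if_false,
        Nat.add_sub_cancel]
      exact hw.lt_right _ _

theorem MemLr.lt_below (hw : MemLr n k r w) (ha : AvoidsPat (⇑w) (MonoPat (k + 1)))
    {i j : ℕ} (h : IsCell (shape n k r) (fun _ => 0) (i, j))
    (h' : IsCell (shape n k r) (fun _ => 0) (i + 1, j)) :
    w (readingEquiv n k r ⟨(i, j), h⟩) < w (readingEquiv n k r ⟨(i + 1, j), h'⟩) := by
  rcases isCell_shape_iff.1 h' with ⟨hi, hj⟩ | ⟨rfl, hj⟩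
  · refine (lt_or_gt_of_ne fun he => ?_).resolve_right fun hlt =>
      ha (hw.containsPat_of_below_lt hi hj h h' hlt)
    have : i = i + 1 := congrArg (·.1.1) ((readingEquiv n k r).injective (w.injective he))
    omega
  · have hjk : j < k := by rcases isCell_shape_iff.1 h with h | h <;> omega
    have hk : k ≤ (i + 1) * k := Nat.le_mul_of_pos_left k (by omega)
    rw [readingEquiv_of_succ_eq h rfl (by omega), readingEquiv_last h' hj]
    exact hw.2.2.2 j hj _

theorem isStandardFilling_of_memLr (hr : r ≤ k) (hw : MemLr n k r w)
    (ha : AvoidsPat (⇑w) (MonoPat (k + 1))) :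
    IsStandardFilling fun c => w (readingEquiv n k r c) :=
  .of_lt_succ (antitone_shape hr) antitone_const (fun _ _ => hw.lt_right) fun _ _ =>
    hw.lt_below ha

theorem memLr_of_isStandardFilling (hr : r ≤ k)
    (hf : IsStandardFilling fun c => w (readingEquiv n k r c)) :
    MemLr n k r w := by
  refine ⟨fun j hj => ?_, fun b j hb hj => ?_, fun b j hb hj => ?_, fun j hj hlt => ?_⟩
  · have h₁ : IsCell (shape n k r) (fun _ => 0) (n, j) :=
      isCell_shape_iff.2 (.inr ⟨rfl, by omega⟩)
    have h₂ : IsCell (shape n k r) (fun _ => 0) (n, j + 1) :=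
      isCell_shape_iff.2 (.inr ⟨rfl, hj⟩)
    rw [← readingEquiv_last h₁ (by omega), ← readingEquiv_last h₂ hj]
    exact hf.row_lt n j (j + 1) h₁ h₂ (by omega)
  · rw [LrPos_eq_readingEquiv, LrPos_eq_readingEquiv]
    exact hf.row_lt _ _ _ _ _ (by omega)
  · rw [LrPos_eq_readingEquiv, LrPos_eq_readingEquiv]
    exact (hf.row_lt _ j (j + 1) _ (isCell_shape_iff.2 (.inl ⟨by omega, hj⟩)) (by omega)).trans
      (hf.col_lt _ _ (j + 1) _ _ (by omega))
  · have hn : 0 < n := Nat.pos_of_ne_zero fun hn => by simp [hn] at hlt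
    have h₁ : IsCell (shape n k r) (fun _ => 0) (n - 1, j) :=
      isCell_shape_iff.2 (.inl ⟨by omega, by omega⟩)
    have h₂ : IsCell (shape n k r) (fun _ => 0) (n, j) := isCell_shape_iff.2 (.inr ⟨rfl, hj⟩)
    rw [← readingEquiv_of_succ_eq h₁ (by omega) hlt, ← readingEquiv_last h₂ hj]
    exact hf.col_lt _ _ _ h₁ h₂ (by omega)

theorem avoidsPat_of_isStandardFilling (hr : r ≤ k)
    (hf : IsStandardFilling fun c => w (readingEquiv n k r c)) :
    AvoidsPat (⇑w) (MonoPat (k + 1)) := fun hw => by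
  obtain ⟨c, hread, hc⟩ := containsPat_monoPat_iff_readLT.1 hw
  have := hf.card_le_of_readLT_chain (antitone_shape hr) (shape_le hr) c hread hc
  omega

theorem memLr_and_avoidsPat_iff (hr : r ≤ k) :
    MemLr n k r w ∧ AvoidsPat (⇑w) (MonoPat (k + 1)) ↔
      IsStandardFilling fun c => w (readingEquiv n k r c) :=
  ⟨fun ⟨hw, ha⟩ => isStandardFilling_of_memLr hr hw ha,
    fun hf => ⟨memLr_of_isStandardFilling hr hf, avoidsPat_of_isStandardFilling hr hf⟩⟩

end ReadingWord

theorem stmt_8_general (n k r : ℕ) (hr : r ≤ k - 1) :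
    Nat.card {w : Equiv.Perm (Fin (n * k + r)) //
        MemLr n k r w ∧ AvoidsPat (⇑w) (MonoPat (k + 1))} =
      Nat.card (SkewSYT (fun i => if i < n then k else if i = n then r else 0)
        (fun _ => 0)) := by
  have hrk : r ≤ k := hr.trans (Nat.sub_le k 1)
  have : Finite (Cells (shape n k r) (fun _ => 0)) := .of_equiv _ (readingEquiv n k r).symm
  calc _ = Nat.card {w : Equiv.Perm (Fin (n * k + r)) //
          IsStandardFilling fun c => w (readingEquiv n k r c)} :=
        Nat.card_congr (Equiv.subtypeEquivRight fun _ => memLr_and_avoidsPat_iff hrk)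
    _ = Nat.card {σ : Cells (shape n k r) (fun _ => 0) ≃ Fin (n * k + r) //
          IsStandardFilling σ} :=
        Nat.card_congr (((readingEquiv n k r).symm.equivCongr (.refl _)).subtypeEquiv
          fun _ => Iff.rfl)
    _ = _ := (Nat.card_congr (SkewSYT.equivStandardFilling
          (Nat.card_eq_of_equiv_fin (readingEquiv n k r)))).symm

/-- `|L_{n,k;r}(1 2 ⋯ (k+1))| = f^{⟨k^n, r⟩}`. -/
theorem stmt_8 (n k r : ℕ) (hn : 1 ≤ n) (hk : 1 ≤ k) (hr : r ≤ k - 1) :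
    Nat.card {w : Equiv.Perm (Fin (n * k + r)) //
        MemLr n k r w ∧ AvoidsPat (⇑w) (MonoPat (k + 1))} =
      Nat.card (SkewSYT (fun i => if i < n then k else if i = n then r else 0)
        (fun _ => 0)) :=
  stmt_8_general n k r hr
end

section
/- For any partition λ, there is exactly one standard Young tableau of (straight) shape λ whose reading word avoids the pattern 213, namely the tableau whose first row contains 1, 2, …, λ_1, whose second row contains the next λ_2 smallest values, and so on row by row. -/
section Aux

variable (lam : ℕ → ℕ)

/-- Partial sums of the parts. -/
def Psum (n : ℕ) : ℕ := ∑ ℓ ∈ Finset.range n, lam ℓ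

lemma Psum_succ (n : ℕ) : Psum lam (n + 1) = Psum lam n + lam n :=
  Finset.sum_range_succ _ _

lemma Psum_mono : Monotone (Psum lam) := fun a b hab =>
  Finset.sum_le_sum_of_subset (Finset.range_subset_range.mpr hab)

lemma cell_iff (c : ℕ × ℕ) : IsCell lam (fun _ => 0) c ↔ c.2 < lam c.1 := by
  simp [IsCell]

lemma decomp_unique {a b a' b' : ℕ} (hb : b < lam a) (hb' : b' < lam a')
    (h : Psum lam a + b = Psum lam a' + b') : a = a' ∧ b = b' := by
  rcases lt_trichotomy a a' with hlt | heq | hgt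
  · have h1 : Psum lam (a + 1) ≤ Psum lam a' := Psum_mono lam hlt
    have h2 := Psum_succ lam a
    omega
  · subst heq; omega
  · have h1 : Psum lam (a' + 1) ≤ Psum lam a := Psum_mono lam hgt
    have h2 := Psum_succ lam a'
    omega

lemma decomp_exists {v n : ℕ} (h1 : 1 ≤ v) (h2 : v ≤ Psum lam n) :
    ∃ a b, a < n ∧ b < lam a ∧ v = Psum lam a + b + 1 := by
  induction n with
  | zero => simp [Psum] at h2; omega
  | succ n ih =>
    by_cases hc : v ≤ Psum lam n
    · obtain ⟨a, b, h⟩ := ih hc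
      exact ⟨a, b, by omega, h.2.1, h.2.2⟩
    · have h3 := Psum_succ lam n
      exact ⟨n, v - Psum lam n - 1, by omega, by omega, by omega⟩

lemma syt_ext {mu : ℕ → ℕ} (T T' : SkewSYT lam mu) (h : T.entry = T'.entry) : T = T' := by
  cases T; cases T'; simp_all

/-- The key lemma: in a 213-avoiding SYT, the entry at each cell is the canonical value. -/
lemma main_lemma (T : SkewSYT lam (fun _ => 0)) (hT : ¬ ReadingContains T ![2, 1, 3])
    (v : ℕ) : ∀ c : ℕ × ℕ, IsCell lam (fun _ => 0) c → T.entry c = v →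
      v = Psum lam c.1 + c.2 + 1 := by
  induction v using Nat.strong_induction_on with
  | _ v ih =>
  rintro ⟨i, j⟩ hc hv
  have hcell : j < lam i := (cell_iff lam _).mp hc
  have hv1 : 1 ≤ v := hv ▸ T.entry_pos _ hc
  set V := Psum lam i + j + 1 with hV
  rcases lt_trichotomy v V with hlt | heq | hgt
  · -- v < V : impossible
    rcases Nat.eq_zero_or_pos j with hj0 | hjpos
    · -- j = 0
      subst hj0
      have hvS : v ≤ Psum lam i := by omega
      obtain ⟨a, b, ha, hb, hab⟩ := decomp_exists lam hv1 hvS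
      have hcab : IsCell lam (fun _ => 0) (a, b) := (cell_iff lam _).mpr hb
      -- entry (a,b) compared with v
      have hne : T.entry (a, b) ≠ v := by
        intro he
        have h5 : (a, b) = (i, 0) := T.entry_inj _ _ hcab hc (he.trans hv.symm)
        have : a = i := congrArg Prod.fst h5
        omega
      have hnlt : ¬ T.entry (a, b) < v := by
        intro hl
        have heq : T.entry (a, b) = Psum lam a + b + 1 := ih _ hl (a, b) hcab rfl
        omega
      have hgtab : v < T.entry (a, b) := by omega
      rcases Nat.eq_zero_or_pos b with hb0 | hbpos
      · -- b = 0 : column strictness contradiction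
        subst hb0
        have := T.col_strict a i 0 hcab hc ha
        omega
      · -- b > 0 : build a 213 pattern
        have hv2 : 2 ≤ v := by omega
        obtain ⟨c2, hc2, he2⟩ := T.entry_init _ hc (v - 1) (by omega) (by omega)
        have h2 := ih (v - 1) (by omega) c2 hc2 he2
        have hc2' : c2 = (a, b - 1) := by
          have hb1 : b - 1 < lam a := by omega
          have := decomp_unique lam ((cell_iff lam _).mp hc2) hb1
            (by omega : Psum lam c2.1 + c2.2 = Psum lam a + (b - 1))
          exact Prod.ext this.1 this.2
        subst hc2'
        exfalso
        apply hT
        refine ⟨![(i, 0), (a, b - 1), (a, b)], ?_, ?_, ?_⟩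
        · intro x
          fin_cases x <;>
            simp only [Fin.reduceFinMk, Fin.isValue, Matrix.cons_val_zero, Matrix.cons_val_one, Matrix.head_cons,
              Matrix.cons_val_two, Matrix.tail_cons]
          · exact hc
          · exact hc2
          · exact hcab
        · have R01 : ReadLT (i, 0) (a, b - 1) := Or.inl ha
          have R02 : ReadLT (i, 0) (a, b) := Or.inl ha
          have R12 : ReadLT (a, b - 1) (a, b) := Or.inr ⟨rfl, show b - 1 < b by omega⟩
          intro x y hxy
          fin_cases x <;> fin_cases y <;>
            first
              | exact absurd hxy (by decide)
              | exact R01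
              | exact R02
              | exact R12
        · intro x y
          fin_cases x <;> fin_cases y <;>
            simp only [Fin.reduceFinMk, Fin.isValue, Matrix.cons_val_zero, Matrix.cons_val_one, Matrix.head_cons,
              Matrix.cons_val_two, Matrix.tail_cons] <;>
            omega
    · -- j > 0 : row strictness plus induction
      have hcl : IsCell lam (fun _ => 0) (i, j - 1) := (cell_iff lam _).mpr (show j - 1 < lam i by omega)
      have hrs := T.row_strict i (j - 1) j hcl hc (by omega)
      rw [hv] at hrs
      have heq : T.entry (i, j - 1) = Psum lam i + (j - 1) + 1 := ih _ hrs (i, j - 1) hcl rfl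
      omega
  · exact heq
  · -- v > V : value V is attained, at cell (i,j), contradiction
    exfalso
    obtain ⟨c', hc', he'⟩ := T.entry_init _ hc V (by omega) (by omega)
    have h2 := ih V (by omega) c' hc' he'
    have : c' = (i, j) := by
      have := decomp_unique lam ((cell_iff lam _).mp hc') hcell
        (by omega : Psum lam c'.1 + c'.2 = Psum lam i + j)
      exact Prod.ext this.1 this.2
    rw [this, hv] at he'; omega

end Aux

section Aux2

variable (lam : ℕ → ℕ)

/-- The canonical (row-superstandard) tableau. -/
def T0 (hmono : ∀ i, lam (i + 1) ≤ lam i) : SkewSYT lam (fun _ => 0) where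
  entry c := if c.2 < lam c.1 then Psum lam c.1 + c.2 + 1 else 0
  entry_outside c hc := by
    rw [cell_iff] at hc; simp [hc]
  entry_pos c hc := by
    rw [cell_iff] at hc; simp [hc]
  entry_inj c c' hc hc' h := by
    rw [cell_iff] at hc hc'
    simp only [if_pos hc, if_pos hc'] at h
    have := decomp_unique lam hc hc' (by omega)
    exact Prod.ext this.1 this.2
  entry_init c hc v hv1 hv2 := by
    rw [cell_iff] at hc
    simp only [if_pos hc] at hv2
    have hle : v ≤ Psum lam (c.1 + 1) := by
      have := Psum_succ lam c.1; omega
    obtain ⟨a, b, _, hb, hab⟩ := decomp_exists lam hv1 hle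
    exact ⟨(a, b), (cell_iff lam _).mpr hb, by simp [hb]; omega⟩
  row_strict i j j' hc hc' hjj := by
    rw [cell_iff] at hc hc'
    simp only at hc hc'
    simp [hc, hc']; omega
  col_strict i i' j hc hc' hii := by
    rw [cell_iff] at hc hc'
    simp only at hc hc'
    simp only [if_pos hc, if_pos hc']
    have h1 : Psum lam (i + 1) ≤ Psum lam i' := Psum_mono lam hii
    have h2 := Psum_succ lam i
    omega

lemma T0_avoids (hmono : ∀ i, lam (i + 1) ≤ lam i) :
    ¬ ReadingContains (T0 lam hmono) ![2, 1, 3] := by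
  rintro ⟨c, hcell, hread, hpat⟩
  have h01 := hread 0 1 (by decide)
  have h12 := hread 1 2 (by decide)
  have e10 : (T0 lam hmono).entry (c 1) < (T0 lam hmono).entry (c 0) := by
    have := (hpat 1 0).mp (by simp)
    exact this
  have e02 : (T0 lam hmono).entry (c 0) < (T0 lam hmono).entry (c 2) := by
    have := (hpat 0 2).mp (by simp)
    exact this
  have k0 := (cell_iff lam _).mp (hcell 0)
  have k1 := (cell_iff lam _).mp (hcell 1)
  have k2 := (cell_iff lam _).mp (hcell 2)
  simp only [T0, if_pos k0, if_pos k1, if_pos k2] at e10 e02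
  -- (c 1).1 < (c 0).1
  have hrow : (c 1).1 < (c 0).1 := by
    rcases h01 with h | ⟨h, h'⟩
    · exact h
    · exfalso; rw [h] at e10; omega
  have hrow2 : (c 2).1 ≤ (c 1).1 := by
    rcases h12 with h | ⟨h, h'⟩ <;> omega
  have hm1 : Psum lam ((c 2).1 + 1) ≤ Psum lam ((c 0).1) := Psum_mono lam (by omega)
  have hm2 := Psum_succ lam (c 2).1
  omega

end Aux2

/-- For any partition `λ` there is exactly one standard Young tableau of straight shape `λ`
whose reading word avoids `213`, namely the tableau whose row `i` (0-indexed) contains the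
values `λ_1 + ⋯ + λ_i + 1, …, λ_1 + ⋯ + λ_{i+1}` from left to right. -/
theorem stmt_12 (lam : ℕ → ℕ) (hlam : IsPartitionFun lam) :
    (∃! T : SkewSYT lam (fun _ => 0), ¬ ReadingContains T ![2, 1, 3]) ∧
    (∀ T : SkewSYT lam (fun _ => 0), ¬ ReadingContains T ![2, 1, 3] →
      ∀ c : ℕ × ℕ, IsCell lam (fun _ => 0) c →
        T.entry c = (∑ ℓ ∈ Finset.range c.1, lam ℓ) + c.2 + 1) := by
  obtain ⟨hmono, -⟩ := hlam
  have formula : ∀ T : SkewSYT lam (fun _ => 0), ¬ ReadingContains T ![2, 1, 3] →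
      ∀ c : ℕ × ℕ, IsCell lam (fun _ => 0) c →
        T.entry c = (∑ ℓ ∈ Finset.range c.1, lam ℓ) + c.2 + 1 := by
    intro T hT c hc
    exact main_lemma lam T hT (T.entry c) c hc rfl
  refine ⟨⟨T0 lam hmono, T0_avoids lam hmono, ?_⟩, formula⟩
  intro T hT
  apply syt_ext
  funext c
  by_cases h : IsCell lam (fun _ => 0) c
  · rw [formula T hT c h]
    have hcl := (cell_iff lam c).mp h
    simp [T0, hcl, Psum]
  · rw [T.entry_outside c h, (T0 lam hmono).entry_outside c h]
end

section
/- For all n ≥ 1, k ≥ 1 and 0 ≤ r ≤ k−1, the number of permutations in L_{n,k;r} avoiding the pattern 213 equals the n-th Catalan number; that is, |L_{n,k;r}(213)| = C_n. In particular |L_{n,k}(213)| = C_n. -/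
lemma contains213_iff {N : ℕ} {α : Type*} [LinearOrder α] (w : Fin N → α) :
    ContainsPat w ![2,1,3] ↔ ∃ a b c : Fin N, a < b ∧ b < c ∧ w b < w a ∧ w a < w c := by
  constructor
  · rintro ⟨f, hf, hp⟩
    refine ⟨f 0, f 1, f 2, hf (by decide), hf (by decide), ?_, ?_⟩
    · exact (hp 1 0).mp (by decide)
    · exact (hp 0 2).mp (by decide)
  · rintro ⟨a, b, c, hab, hbc, h1, h2⟩
    refine ⟨![a,b,c], ?_, ?_⟩
    · intro x y hxy
      fin_cases x <;> fin_cases y <;>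
        simp only [Matrix.cons_val_zero, Matrix.cons_val_one, Matrix.head_cons,
          Matrix.cons_val_two, Matrix.tail_cons] <;>
        first
          | exact absurd hxy (by decide)
          | exact hab
          | exact hbc
          | exact hab.trans hbc
    · intro x y
      fin_cases x <;> fin_cases y <;>
        simp only [Matrix.cons_val_zero, Matrix.cons_val_one, Matrix.head_cons,
          Matrix.cons_val_two, Matrix.tail_cons] <;>
        norm_num <;>
        first
          | exact h1
          | exact h2
          | exact h1.trans h2
          | exact lt_irrefl _
          | exact lt_asymm h1
          | exact lt_asymm h2
          | exact lt_asymm (h1.trans h2)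
          | exact h1.le
          | exact h2.le
          | exact (h1.trans h2).le

lemma avoidsPat_of_embed {N M s : ℕ} {α β : Type*} [LinearOrder α] [LinearOrder β]
    (w : Fin N → α) (w' : Fin M → β) (e : Fin M → Fin N) (he : StrictMono e)
    (hvals : ∀ p q, w' p < w' q ↔ w (e p) < w (e q)) (p : Fin s → ℕ) :
    AvoidsPat w p → AvoidsPat w' p := by
  rintro hA ⟨f, hf, hp⟩
  exact hA ⟨e ∘ f, he.comp hf, fun a b => (hp a b).trans (hvals _ _)⟩

lemma nat_card_sigma {ι : Type*} [Fintype ι] {α : ι → Type*} [∀ i, Finite (α i)] :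
    Nat.card (Sigma α) = ∑ i, Nat.card (α i) := by
  classical
  letI : ∀ i, Fintype (α i) := fun i => Fintype.ofFinite _
  simp [Nat.card_eq_fintype_card, Fintype.card_sigma]

lemma kmul_mono {a b k : ℕ} (h : a ≤ b) : a * k ≤ b * k := Nat.mul_le_mul_right k h
lemma kmul_succ (a k : ℕ) : (a+1)*k = a*k + k := by ring

lemma glue_len (n k r i : ℕ) (hk : 1 ≤ k) (hi : i < n) :
    (r + i*k) + 1 + ((n-1-i)*k + (k-1)) = n*k + r := by
  have h1 : (i + (n - 1 - i + 1)) * k = n * k := by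
    rw [show i + (n - 1 - i + 1) = n from by omega]
  have h2 : (i + (n - 1 - i + 1)) * k = i*k + (n-1-i)*k + k := by ring
  omega

section Glue

variable {n k r i : ℕ}

def glueFun (hk : 1 ≤ k) (hi : i < n)
    (u : Equiv.Perm (Fin (i*k+r))) (v : Equiv.Perm (Fin ((n-1-i)*k+(k-1)))) :
    Fin (n*k+r) → Fin (n*k+r) := fun p =>
  if h1 : (p : ℕ) < r + i*k then
    ⟨(u ⟨(p : ℕ), by omega⟩ : ℕ) + ((n-1-i)*k + (k-1)) + 1, by
      have hN := glue_len n k r i hk hi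
      have hu := (u ⟨(p : ℕ), by omega⟩).isLt
      omega⟩
  else if h2 : (p : ℕ) = r + i*k then
    ⟨0, by have hN := glue_len n k r i hk hi; omega⟩
  else
    ⟨(v ⟨(p : ℕ) - (r + i*k) - 1, by
        have hN := glue_len n k r i hk hi
        have hp := p.isLt
        omega⟩ : ℕ) + 1, by
      have hN := glue_len n k r i hk hi
      have hv := (v ⟨(p : ℕ) - (r + i*k) - 1, by
        have hN := glue_len n k r i hk hi
        have hp := p.isLt
        omega⟩).isLt
      omega⟩

variable (hk : 1 ≤ k) (hi : i < n)
    (u : Equiv.Perm (Fin (i*k+r))) (v : Equiv.Perm (Fin ((n-1-i)*k+(k-1))))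

lemma glueFun_val_lt {p : ℕ} (hpN : p < n*k+r) (hp : p < r + i*k) (hp' : p < i*k + r) :
    (glueFun hk hi u v ⟨p, hpN⟩ : ℕ) = (u ⟨p, hp'⟩ : ℕ) + ((n-1-i)*k + (k-1)) + 1 := by
  simp [glueFun, dif_pos hp]

lemma glueFun_val_eq {p : ℕ} (hpN : p < n*k+r) (hp : p = r + i*k) :
    (glueFun hk hi u v ⟨p, hpN⟩ : ℕ) = 0 := by
  simp [glueFun, hp]

lemma glueFun_val_gt {p : ℕ} (hpN : p < n*k+r) (hp : r + i*k < p)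
    (hq : p - (r + i*k) - 1 < (n-1-i)*k + (k-1)) :
    (glueFun hk hi u v ⟨p, hpN⟩ : ℕ) = (v ⟨p - (r + i*k) - 1, hq⟩ : ℕ) + 1 := by
  have h1 : ¬ (p < r + i*k) := by omega
  have h2 : ¬ (p = r + i*k) := by omega
  simp [glueFun, h1, h2]

lemma glueFun_injective : Function.Injective (glueFun hk hi u v) := by
  intro p q h
  have hN := glue_len n k r i hk hi
  have hval : ((glueFun hk hi u v p) : ℕ) = ((glueFun hk hi u v q) : ℕ) := congrArg Fin.val h
  obtain ⟨p, hpN⟩ := p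
  obtain ⟨q, hqN⟩ := q
  rcases lt_trichotomy p (r+i*k) with hp|hp|hp <;>
    rcases lt_trichotomy q (r+i*k) with hq|hq|hq
  · rw [glueFun_val_lt hk hi u v hpN hp (by omega), glueFun_val_lt hk hi u v hqN hq (by omega)]
      at hval
    have h3 : u ⟨p, by omega⟩ = u ⟨q, by omega⟩ := Fin.ext (by omega)
    have h4 := u.injective h3
    rw [Fin.mk.injEq] at h4
    exact Fin.ext h4
  · rw [glueFun_val_lt hk hi u v hpN hp (by omega), glueFun_val_eq hk hi u v hqN hq] at hval
    omega
  · rw [glueFun_val_lt hk hi u v hpN hp (by omega),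
      glueFun_val_gt hk hi u v hqN hq (by omega)] at hval
    have := (v ⟨q - (r + i*k) - 1, by omega⟩).isLt
    omega
  · rw [glueFun_val_eq hk hi u v hpN hp, glueFun_val_lt hk hi u v hqN hq (by omega)] at hval
    omega
  · exact Fin.ext (show p = q by omega)
  · rw [glueFun_val_eq hk hi u v hpN hp, glueFun_val_gt hk hi u v hqN hq (by omega)] at hval
    omega
  · rw [glueFun_val_gt hk hi u v hpN hp (by omega),
      glueFun_val_lt hk hi u v hqN hq (by omega)] at hval
    have := (v ⟨p - (r + i*k) - 1, by omega⟩).isLt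
    omega
  · rw [glueFun_val_gt hk hi u v hpN hp (by omega), glueFun_val_eq hk hi u v hqN hq] at hval
    omega
  · rw [glueFun_val_gt hk hi u v hpN hp (by omega),
      glueFun_val_gt hk hi u v hqN hq (by omega)] at hval
    have h3 : v ⟨p - (r + i*k) - 1, by omega⟩ = v ⟨q - (r + i*k) - 1, by omega⟩ :=
      Fin.ext (by omega)
    have h4 := v.injective h3
    rw [Fin.mk.injEq] at h4
    exact Fin.ext (show p = q by omega)

noncomputable def gluePerm : Equiv.Perm (Fin (n*k+r)) :=
  Equiv.ofBijective _ ((Finite.injective_iff_bijective).mp (glueFun_injective hk hi u v))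

lemma gluePerm_coe : ⇑(gluePerm hk hi u v) = glueFun hk hi u v := rfl

end Glue

section GlueCmp

variable {n k r i : ℕ} (hk : 1 ≤ k) (hi : i < n)
    (u : Equiv.Perm (Fin (i*k+r))) (v : Equiv.Perm (Fin ((n-1-i)*k+(k-1))))

lemma glue_big {p : ℕ} (hpN : p < n*k+r) (hp : p < r + i*k) :
    (n-1-i)*k + (k-1) + 1 ≤ (glueFun hk hi u v ⟨p, hpN⟩ : ℕ) := by
  rw [glueFun_val_lt hk hi u v hpN hp (by omega)]
  omega

lemma glue_small {p : ℕ} (hpN : p < n*k+r) (hp : r + i*k < p) :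
    1 ≤ (glueFun hk hi u v ⟨p, hpN⟩ : ℕ) ∧
      (glueFun hk hi u v ⟨p, hpN⟩ : ℕ) ≤ (n-1-i)*k + (k-1) := by
  have hN := glue_len n k r i hk hi
  rw [glueFun_val_gt hk hi u v hpN hp (by omega)]
  have := (v ⟨p - (r + i*k) - 1, by omega⟩).isLt
  omega

lemma glue_lt_uu_iff {p q : ℕ} (hpN : p < n*k+r) (hqN : q < n*k+r)
    (hp : p < r + i*k) (hq : q < r + i*k) {hp' : p < i*k+r} {hq' : q < i*k+r} :
    glueFun hk hi u v ⟨p, hpN⟩ < glueFun hk hi u v ⟨q, hqN⟩ ↔ u ⟨p, hp'⟩ < u ⟨q, hq'⟩ := by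
  rw [Fin.lt_def, Fin.lt_def, glueFun_val_lt hk hi u v hpN hp hp',
    glueFun_val_lt hk hi u v hqN hq hq']
  omega

lemma glue_lt_vv_iff {p q x y : ℕ} (hpN : p < n*k+r) (hqN : q < n*k+r)
    (hx : p = r + i*k + 1 + x) (hy : q = r + i*k + 1 + y)
    {hx' : x < (n-1-i)*k+(k-1)} {hy' : y < (n-1-i)*k+(k-1)} :
    glueFun hk hi u v ⟨p, hpN⟩ < glueFun hk hi u v ⟨q, hqN⟩ ↔ v ⟨x, hx'⟩ < v ⟨y, hy'⟩ := by
  have hN := glue_len n k r i hk hi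
  rw [Fin.lt_def, Fin.lt_def,
    glueFun_val_gt hk hi u v hpN (by omega) (by omega),
    glueFun_val_gt hk hi u v hqN (by omega) (by omega)]
  have e1 : (⟨p - (r + i*k) - 1, by omega⟩ : Fin ((n-1-i)*k+(k-1))) = ⟨x, hx'⟩ :=
    Fin.ext (show p - (r + i*k) - 1 = x by omega)
  have e2 : (⟨q - (r + i*k) - 1, by omega⟩ : Fin ((n-1-i)*k+(k-1))) = ⟨y, hy'⟩ :=
    Fin.ext (show q - (r + i*k) - 1 = y by omega)
  rw [e1, e2]
  omega

lemma glue_cross {p q : ℕ} (hpN : p < n*k+r) (hqN : q < n*k+r)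
    (hp : p < r + i*k) (hq : r + i*k ≤ q) :
    glueFun hk hi u v ⟨q, hqN⟩ < glueFun hk hi u v ⟨p, hpN⟩ := by
  rw [Fin.lt_def]
  have hbig := glue_big hk hi u v hpN hp
  rcases eq_or_lt_of_le hq with hq'|hq'
  · rw [glueFun_val_eq hk hi u v hqN hq'.symm]
    omega
  · have := glue_small hk hi u v hqN hq'
    omega

lemma glue_zero_lt {p q : ℕ} (hpN : p < n*k+r) (hqN : q < n*k+r)
    (hp : p = r + i*k) (hq : q ≠ r + i*k) :
    glueFun hk hi u v ⟨p, hpN⟩ < glueFun hk hi u v ⟨q, hqN⟩ := by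
  rw [Fin.lt_def, glueFun_val_eq hk hi u v hpN hp]
  rcases lt_or_gt_of_ne hq with h|h
  · have := glue_big hk hi u v hqN h
    omega
  · have := (glue_small hk hi u v hqN h).1
    omega

end GlueCmp

section GlueMem

variable {n k r i : ℕ} (hk : 1 ≤ k) (hi : i < n)
    (u : Equiv.Perm (Fin (i*k+r))) (v : Equiv.Perm (Fin ((n-1-i)*k+(k-1))))

lemma memLr_glue_iff (hr : r ≤ k - 1) :
    MemLr n k r (gluePerm hk hi u v) ↔
      MemLr i k r u ∧ MemLr (n-1-i) k (k-1) v := by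
  have hN := glue_len n k r i hk hi
  constructor
  · rintro ⟨h1, h2, h3, h4⟩
    refine ⟨⟨?_, ?_, ?_, ?_⟩, ⟨?_, ?_, ?_, ?_⟩⟩
    · -- u cond1
      intro j hj
      exact (glue_lt_uu_iff hk hi u v (by omega) (by omega) (by omega) (by omega)).mp
        (h1 j (by omega))
    · -- u cond2
      intro a j ha hj
      have hm1 := kmul_mono (k := k) (show a+1 ≤ i by omega)
      have hm2 := kmul_succ a k
      exact (glue_lt_uu_iff hk hi u v (by omega) (by omega) (by omega) (by omega)).mp
        (h2 a j (by omega) hj)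
    · -- u cond3
      intro a j ha hj
      have hm1 := kmul_mono (k := k) (show a+1+1 ≤ i by omega)
      have hm2 := kmul_succ a k
      have hm3 := kmul_succ (a+1) k
      exact (glue_lt_uu_iff hk hi u v (by omega) (by omega) (by omega) (by omega)).mp
        (h3 a j (by omega) hj)
    · -- u cond4
      intro j hj h
      exact (glue_lt_uu_iff hk hi u v (by omega) (by omega) (by omega) (by omega)).mp
        (h4 j hj (by omega))
    · -- v cond1
      intro j hj
      exact (glue_lt_vv_iff hk hi u v (by omega) (by omega)
        (show r+(i*k+(j+1)) = r+i*k+1+j by omega)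
        (show r+(i*k+(j+1+1)) = r+i*k+1+(j+1) by omega)).mp
        (h2 i (j+1) hi (by omega))
    · -- v cond2
      intro b j hb hj
      have e3 : (i + 1 + b) * k = i*k + k + b*k := by ring
      have hm1 := kmul_mono (k := k) (show i+1+b+1 ≤ n by omega)
      have hm2 := kmul_succ (i+1+b) k
      exact (glue_lt_vv_iff hk hi u v (by omega) (by omega)
        (show r+((i+1+b)*k+j) = r+i*k+1+((k-1)+(b*k+j)) by omega)
        (show r+((i+1+b)*k+(j+1)) = r+i*k+1+((k-1)+(b*k+(j+1))) by omega)).mp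
        (h2 (i+1+b) j (by omega) hj)
    · -- v cond3
      intro b j hb hj
      have e3 : (i + 1 + b) * k = i*k + k + b*k := by ring
      have e4 : (i + 1 + b + 1) * k = i*k + k + b*k + k := by ring
      have e5 : (b+1)*k = b*k + k := kmul_succ b k
      have hm1 := kmul_mono (k := k) (show i+1+b+1+1 ≤ n by omega)
      have hm2 := kmul_succ (i+1+b+1) k
      have hm3 := kmul_succ (i+1+b) k
      exact (glue_lt_vv_iff hk hi u v (by omega) (by omega)
        (show r+((i+1+b+1)*k+j) = r+i*k+1+((k-1)+((b+1)*k+j)) by omega)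
        (show r+((i+1+b)*k+(j+1)) = r+i*k+1+((k-1)+(b*k+(j+1))) by omega)).mp
        (h3 (i+1+b) j (by omega) hj)
    · -- v cond4
      intro j hj h
      rcases Nat.eq_zero_or_pos (n-1-i) with h0|h0
      · have : (n-1-i)*k = 0 := by rw [h0]; exact Nat.zero_mul k
        omega
      · have e3 : (i + 1) * k = i*k + k := kmul_succ i k
        have hm1 := kmul_mono (k := k) (show i+1+1 ≤ n by omega)
        have hm2 := kmul_succ (i+1) k
        exact (glue_lt_vv_iff hk hi u v (by omega) (by omega)
          (show r+((i+1)*k+j) = r+i*k+1+((k-1)+j) by omega)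
          (show r+(i*k+(j+1)) = r+i*k+1+j by omega)).mp
          (h3 i j (by omega) (by omega))
  · rintro ⟨hu, hv⟩
    refine ⟨?_, ?_, ?_, ?_⟩
    · -- w cond1
      intro j hj
      exact (glue_lt_uu_iff hk hi u v (by omega) (by omega) (by omega) (by omega)).mpr
        (hu.1 j hj)
    · -- w cond2
      intro a j ha hj
      rcases lt_trichotomy a i with h|h|h
      · have hm1 := kmul_mono (k := k) (show a+1 ≤ i by omega)
        have hm2 := kmul_succ a k
        exact (glue_lt_uu_iff hk hi u v (by omega) (by omega) (by omega) (by omega)).mpr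
          (hu.2.1 a j h hj)
      · subst h
        rcases Nat.eq_zero_or_pos j with hj0|hj0
        · subst hj0
          exact glue_zero_lt hk hi u v (by omega) (by omega) (by omega) (by omega)
        · exact (glue_lt_vv_iff hk hi u v (by omega) (by omega)
            (show r+(a*k+j) = r+a*k+1+(j-1) by omega)
            (show r+(a*k+(j+1)) = r+a*k+1+(j-1+1) by omega)).mpr
            (hv.1 (j-1) (by omega))
      · have e3 : (i + 1 + (a-1-i)) * k = i*k + k + (a-1-i)*k := by ring
        have e4 : (i + 1 + (a-1-i)) * k = a * k := by
          rw [show i+1+(a-1-i) = a by omega]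
        have hm1 := kmul_mono (k := k) (show a+1 ≤ n by omega)
        have hm2 := kmul_succ a k
        exact (glue_lt_vv_iff hk hi u v (by omega) (by omega)
          (show r+(a*k+j) = r+i*k+1+((k-1)+((a-1-i)*k+j)) by omega)
          (show r+(a*k+(j+1)) = r+i*k+1+((k-1)+((a-1-i)*k+(j+1))) by omega)).mpr
          (hv.2.1 (a-1-i) j (by omega) hj)
    · -- w cond3
      intro a j ha hj
      rcases lt_trichotomy (a+1) i with h|h|h
      · have hm1 := kmul_mono (k := k) (show a+1+1 ≤ i by omega)
        have hm2 := kmul_succ a k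
        have hm3 := kmul_succ (a+1) k
        exact (glue_lt_uu_iff hk hi u v (by omega) (by omega) (by omega) (by omega)).mpr
          (hu.2.2.1 a j h hj)
      · -- a+1 = i
        have hEq : (a+1)*k = i*k := by rw [h]
        have hms := kmul_succ a k
        have hmi := kmul_succ i k
        have hm1 := kmul_mono (k := k) (show i+1 ≤ n by omega)
        rcases Nat.eq_zero_or_pos j with hj0|hj0
        · subst hj0
          exact glue_zero_lt hk hi u v (by omega) (by omega) (by omega) (by omega)
        · exact glue_cross hk hi u v (by omega) (by omega) (by omega) (by omega)
      · -- i ≤ a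
        rcases Nat.eq_or_lt_of_le (show i ≤ a by omega) with h'|h'
        · -- a = i : v cond4
          subst h'
          have e3 := kmul_succ i k
          have hm1 := kmul_mono (k := k) (show i+1+1 ≤ n by omega)
          have hm2 := kmul_succ (i+1) k
          exact (glue_lt_vv_iff hk hi u v (by omega) (by omega)
            (show r+((i+1)*k+j) = r+i*k+1+((k-1)+j) by omega)
            (show r+(i*k+(j+1)) = r+i*k+1+j by omega)).mpr
            (hv.2.2.2 j (by omega) (by omega))
        · -- i < a : v cond3
          have e3 : (i + 1 + (a-1-i)) * k = i*k + k + (a-1-i)*k := by ring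
          have e4 : (i + 1 + (a-1-i)) * k = a * k := by
            rw [show i+1+(a-1-i) = a by omega]
          have e7 : (a-1-i+1) * k = (a-1-i) * k + k := kmul_succ _ k
          have e5 : (i + 1 + (a-1-i+1)) * k = i*k + k + (a-1-i+1)*k := by ring
          have e6 : (i + 1 + (a-1-i+1)) * k = (a+1) * k := by
            rw [show i+1+(a-1-i+1) = a+1 by omega]
          have hm1 := kmul_mono (k := k) (show a+1+1 ≤ n by omega)
          have hm2 := kmul_succ (a+1) k
          have hm3 := kmul_succ a k
          exact (glue_lt_vv_iff hk hi u v (by omega) (by omega)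
            (show r+((a+1)*k+j) = r+i*k+1+((k-1)+((a-1-i+1)*k+j)) by omega)
            (show r+(a*k+(j+1)) = r+i*k+1+((k-1)+((a-1-i)*k+(j+1))) by omega)).mpr
            (hv.2.2.1 (a-1-i) j (by omega) hj)
    · -- w cond4
      intro j hj h
      rcases Nat.eq_zero_or_pos i with hi0|hi0
      · have hz : i*k = 0 := by rw [hi0]; exact Nat.zero_mul k
        rcases Nat.eq_zero_or_pos j with hj0|hj0
        · subst hj0
          exact glue_zero_lt hk hi u v (by omega) (by omega) (by omega) (by omega)
        · exact glue_cross hk hi u v (by omega) (by omega) (by omega) (by omega)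
      · have hm1 := kmul_mono (k := k) (show 1 ≤ i by omega)
        have hm2 : 1 * k = k := Nat.one_mul k
        exact (glue_lt_uu_iff hk hi u v (by omega) (by omega) (by omega) (by omega)).mpr
          (hu.2.2.2 j hj (by omega))

end GlueMem

section GlueAvoid

variable {n k r i : ℕ} (hk : 1 ≤ k) (hi : i < n)
    (u : Equiv.Perm (Fin (i*k+r))) (v : Equiv.Perm (Fin ((n-1-i)*k+(k-1))))

lemma avoids_glue_iff :
    AvoidsPat ⇑(gluePerm hk hi u v) ![2,1,3] ↔
      AvoidsPat ⇑u ![2,1,3] ∧ AvoidsPat ⇑v ![2,1,3] := by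
  have hN := glue_len n k r i hk hi
  constructor
  · intro hA
    constructor
    · refine avoidsPat_of_embed _ _ (fun p => ⟨(p : ℕ), by omega⟩) ?_ ?_ _ hA
      · intro p q h
        exact Fin.mk_lt_mk.mpr h
      · intro p q
        exact (glue_lt_uu_iff hk hi u v (by omega) (by omega) (by omega) (by omega)
          (hp' := p.isLt) (hq' := q.isLt)).symm
    · refine avoidsPat_of_embed _ _ (fun p => ⟨r + i*k + 1 + (p : ℕ), by omega⟩) ?_ ?_ _ hA
      · intro p q h
        exact Fin.mk_lt_mk.mpr (by
          have := (Fin.lt_def.mp h)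
          omega)
      · intro p q
        exact (glue_lt_vv_iff hk hi u v (by omega) (by omega) rfl rfl
          (hx' := p.isLt) (hy' := q.isLt)).symm
  · rintro ⟨hu, hv⟩ hC
    rw [contains213_iff] at hC
    obtain ⟨a, b, c, hab, hbc, h1, h2⟩ := hC
    obtain ⟨a, haN⟩ := a
    obtain ⟨b, hbN⟩ := b
    obtain ⟨c, hcN⟩ := c
    rw [Fin.mk_lt_mk] at hab hbc
    rw [show ⇑(gluePerm hk hi u v) = glueFun hk hi u v from rfl] at h1 h2
    rcases lt_trichotomy a (r+i*k) with ha|ha|ha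
    · have hc : c < r+i*k := by
        by_contra hc
        exact absurd h2 (lt_asymm (glue_cross hk hi u v haN hcN ha (by omega)))
      apply hu
      rw [contains213_iff]
      exact ⟨⟨a, by omega⟩, ⟨b, by omega⟩, ⟨c, by omega⟩,
        Fin.mk_lt_mk.mpr hab, Fin.mk_lt_mk.mpr hbc,
        (glue_lt_uu_iff hk hi u v hbN haN (by omega) (by omega)).mp h1,
        (glue_lt_uu_iff hk hi u v haN hcN (by omega) (by omega)).mp h2⟩
    · have hz := glueFun_val_eq hk hi u v haN ha
      rw [Fin.lt_def] at h1
      omega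
    · apply hv
      rw [contains213_iff]
      refine ⟨⟨a - (r+i*k) - 1, by omega⟩, ⟨b - (r+i*k) - 1, by omega⟩,
        ⟨c - (r+i*k) - 1, by omega⟩,
        Fin.mk_lt_mk.mpr (by omega), Fin.mk_lt_mk.mpr (by omega), ?_, ?_⟩
      · exact (glue_lt_vv_iff hk hi u v hbN haN
          (show b = r+i*k+1+(b - (r+i*k) - 1) by omega)
          (show a = r+i*k+1+(a - (r+i*k) - 1) by omega)).mp h1
      · exact (glue_lt_vv_iff hk hi u v haN hcN
          (show a = r+i*k+1+(a - (r+i*k) - 1) by omega)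
          (show c = r+i*k+1+(c - (r+i*k) - 1) by omega)).mp h2

end GlueAvoid

lemma decompose {n k r : ℕ} (hk : 1 ≤ k) (hn : 0 < n) (hr : r ≤ k - 1)
    (w : Equiv.Perm (Fin (n*k+r))) (hmem : MemLr n k r w) (hav : AvoidsPat ⇑w ![2,1,3]) :
    ∃ (i : ℕ) (hi : i < n) (u : Equiv.Perm (Fin (i*k+r)))
      (v : Equiv.Perm (Fin ((n-1-i)*k+(k-1)))), gluePerm hk hi u v = w := by
  classical
  obtain ⟨h1, h2, h3, h4⟩ := hmem
  have hkn := kmul_mono (k := k) (show 1 ≤ n by omega)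
  have h1k : 1*k = k := Nat.one_mul k
  have hN0 : 0 < n*k+r := by omega
  set p0 : Fin (n*k+r) := w.symm ⟨0, hN0⟩ with hp0def
  have hwp0 : w p0 = ⟨0, hN0⟩ := w.apply_symm_apply _
  have hpos : ∀ p : Fin (n*k+r), p ≠ p0 → 0 < (w p : ℕ) := by
    intro p hp
    rcases Nat.eq_zero_or_pos (w p : ℕ) with h0|h0
    · exfalso
      apply hp
      have he : w p = ⟨0, hN0⟩ := Fin.ext h0
      calc p = w.symm (w p) := (w.symm_apply_apply p).symm
        _ = p0 := by rw [he]
    · exact h0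
  obtain ⟨i, hi, hP⟩ : ∃ i, i < n ∧ (p0 : ℕ) = r + i*k := by
    have hrle : r ≤ (p0:ℕ) := by
      by_contra hlt
      push_neg at hlt
      rcases Nat.eq_zero_or_pos (p0:ℕ) with h0|h0
      · have hlt0 := h4 0 (by omega) (by omega)
        have e2 : (⟨0, by omega⟩ : Fin (n*k+r)) = p0 := Fin.ext h0.symm
        rw [e2, hwp0] at hlt0
        exact absurd hlt0 (by rw [Fin.lt_def]; exact Nat.not_lt_zero _)
      · have hlt0 := h1 ((p0:ℕ) - 1) (by omega)
        have e2 : (⟨(p0:ℕ) - 1 + 1, by omega⟩ : Fin (n*k+r)) = p0 :=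
          Fin.ext (show (p0:ℕ) - 1 + 1 = (p0:ℕ) by omega)
        rw [e2, hwp0] at hlt0
        exact absurd hlt0 (by rw [Fin.lt_def]; exact Nat.not_lt_zero _)
    have hdm := Nat.div_add_mod ((p0:ℕ) - r) k
    have hcomm : k * (((p0:ℕ) - r)/k) = (((p0:ℕ) - r)/k) * k := Nat.mul_comm _ _
    have hjk : ((p0:ℕ) - r) % k < k := Nat.mod_lt _ (by omega)
    have hin : ((p0:ℕ) - r)/k < n := by
      rw [Nat.div_lt_iff_lt_mul (by omega)]
      have := p0.isLt
      omega
    refine ⟨((p0:ℕ) - r)/k, hin, ?_⟩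
    rcases Nat.eq_zero_or_pos (((p0:ℕ) - r) % k) with hm0|hm0
    · omega
    · exfalso
      have hyval : ((w (LrPos n k r (((p0:ℕ) - r)/k) ((((p0:ℕ) - r) % k - 1) + 1) hin
          (by omega))) : ℕ) = 0 := by
        have e : LrPos n k r (((p0:ℕ) - r)/k) ((((p0:ℕ) - r) % k - 1) + 1) hin (by omega)
            = p0 := by
          apply Fin.ext
          simp only [LrPos]
          omega
        rw [e, hwp0]
      have hlt := h2 (((p0:ℕ) - r)/k) (((p0:ℕ) - r) % k - 1) hin (by omega)
      rw [Fin.lt_def, hyval] at hlt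
      omega
  have hNlen := glue_len n k r i hk hi
  have hsplit : ∀ (a c : Fin (n*k+r)), (a:ℕ) < (p0:ℕ) → (p0:ℕ) < (c:ℕ) → w c < w a := by
    intro a c ha hc
    by_contra hcon
    push_neg at hcon
    have hne : w a ≠ w c := fun he => absurd (congrArg Fin.val (w.injective he)) (by omega)
    have hac : w a < w c := lt_of_le_of_ne hcon hne
    have h0a : w p0 < w a := by
      rw [hwp0, Fin.lt_def]
      exact hpos a (fun he => absurd (congrArg Fin.val he) (by omega))
    apply hav
    rw [contains213_iff]
    exact ⟨a, p0, c, Fin.lt_def.mpr ha, Fin.lt_def.mpr hc, h0a, hac⟩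
  have hbig : ∀ (p : ℕ) (hp : p < n*k+r), p < r + i*k →
      (n-1-i)*k + (k-1) + 1 ≤ (w ⟨p, hp⟩ : ℕ) := by
    intro p hp hpA
    have hsub : (insert p0 (Finset.Ioi p0)).image w ⊆ Finset.Iio (w ⟨p, hp⟩) := by
      intro x hx
      rw [Finset.mem_image] at hx
      obtain ⟨y, hy, rfl⟩ := hx
      rw [Finset.mem_insert] at hy
      rw [Finset.mem_Iio]
      rcases hy with rfl|hy
      · rw [hwp0, Fin.lt_def]
        exact hpos _ (fun he => absurd (congrArg Fin.val he) (show ¬ (p = (p0:ℕ)) by omega))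
      · rw [Finset.mem_Ioi] at hy
        exact hsplit ⟨p, hp⟩ y (show p < (p0:ℕ) by omega) (Fin.lt_def.mp hy)
    have hcard := Finset.card_le_card hsub
    rw [Finset.card_image_of_injective _ w.injective,
      Finset.card_insert_of_notMem (by simp), Fin.card_Ioi] at hcard
    rw [Fin.card_Iio] at hcard
    omega
  have hsmall : ∀ (p : ℕ) (hp : p < n*k+r), r + i*k < p →
      1 ≤ (w ⟨p, hp⟩ : ℕ) ∧ (w ⟨p, hp⟩ : ℕ) ≤ (n-1-i)*k + (k-1) := by
    intro p hp hpA
    constructor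
    · exact hpos _ (fun he => absurd (congrArg Fin.val he) (show ¬ (p = (p0:ℕ)) by omega))
    · have hsub : (Finset.Iio p0).image w ⊆ Finset.Ioi (w ⟨p, hp⟩) := by
        intro x hx
        rw [Finset.mem_image] at hx
        obtain ⟨y, hy, rfl⟩ := hx
        rw [Finset.mem_Iio] at hy
        rw [Finset.mem_Ioi]
        exact hsplit y ⟨p, hp⟩ (Fin.lt_def.mp hy) (show (p0:ℕ) < p by omega)
      have hcard := Finset.card_le_card hsub
      rw [Finset.card_image_of_injective _ w.injective, Fin.card_Iio, Fin.card_Ioi] at hcard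
      omega
  have hplt : ∀ p : Fin (i*k+r), (p:ℕ) < n*k+r := fun p => by have := p.isLt; omega
  have hqlt : ∀ q : Fin ((n-1-i)*k+(k-1)), r + i*k + 1 + (q:ℕ) < n*k+r := fun q => by
    have := q.isLt; omega
  obtain ⟨u, hu⟩ : ∃ u : Equiv.Perm (Fin (i*k+r)), ∀ (p : ℕ) (hp1 : p < i*k+r)
      (hp2 : p < n*k+r),
      (u ⟨p, hp1⟩ : ℕ) = (w ⟨p, hp2⟩ : ℕ) - ((n-1-i)*k + (k-1) + 1) := by
    have hinj : Function.Injective (fun p : Fin (i*k+r) =>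
        (⟨(w ⟨(p:ℕ), hplt p⟩ : ℕ) - ((n-1-i)*k + (k-1) + 1), by
          have hb := hbig (p:ℕ) (hplt p) (by have := p.isLt; omega)
          have hl := (w ⟨(p:ℕ), hplt p⟩).isLt
          omega⟩ : Fin (i*k+r))) := by
      intro p q h
      rw [Fin.mk.injEq] at h
      have hbp := hbig (p:ℕ) (hplt p) (by have := p.isLt; omega)
      have hbq := hbig (q:ℕ) (hplt q) (by have := q.isLt; omega)
      have heq := w.injective (show w ⟨(p:ℕ), hplt p⟩ = w ⟨(q:ℕ), hplt q⟩ from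
        Fin.ext (by omega))
      rw [Fin.mk.injEq] at heq
      exact Fin.ext heq
    exact ⟨Equiv.ofBijective _ ((Finite.injective_iff_bijective).mp hinj),
      fun p hp1 hp2 => rfl⟩
  obtain ⟨v, hv⟩ : ∃ v : Equiv.Perm (Fin ((n-1-i)*k+(k-1))), ∀ (x : ℕ)
      (hx1 : x < (n-1-i)*k+(k-1)) (hx2 : r + i*k + 1 + x < n*k+r),
      (v ⟨x, hx1⟩ : ℕ) = (w ⟨r + i*k + 1 + x, hx2⟩ : ℕ) - 1 := by
    have hinj : Function.Injective (fun q : Fin ((n-1-i)*k+(k-1)) =>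
        (⟨(w ⟨r + i*k + 1 + (q:ℕ), hqlt q⟩ : ℕ) - 1, by
          have hb := hsmall (r + i*k + 1 + (q:ℕ)) (hqlt q) (by omega)
          omega⟩ : Fin ((n-1-i)*k+(k-1)))) := by
      intro p q h
      rw [Fin.mk.injEq] at h
      have hbp := hsmall (r + i*k + 1 + (p:ℕ)) (hqlt p) (by omega)
      have hbq := hsmall (r + i*k + 1 + (q:ℕ)) (hqlt q) (by omega)
      have heq := w.injective (show w ⟨r + i*k + 1 + (p:ℕ), hqlt p⟩
          = w ⟨r + i*k + 1 + (q:ℕ), hqlt q⟩ from Fin.ext (by omega))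
      rw [Fin.mk.injEq] at heq
      exact Fin.ext (by omega)
    exact ⟨Equiv.ofBijective _ ((Finite.injective_iff_bijective).mp hinj),
      fun x hx1 hx2 => rfl⟩
  refine ⟨i, hi, u, v, ?_⟩
  apply Equiv.ext
  intro p
  apply Fin.ext
  obtain ⟨p, hp⟩ := p
  rcases lt_trichotomy p (r + i*k) with hc|hc|hc
  · show (glueFun hk hi u v ⟨p, hp⟩ : ℕ) = (w ⟨p, hp⟩ : ℕ)
    rw [glueFun_val_lt hk hi u v hp hc (by omega), hu p (by omega) hp]
    have hb := hbig p hp hc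
    omega
  · show (glueFun hk hi u v ⟨p, hp⟩ : ℕ) = (w ⟨p, hp⟩ : ℕ)
    rw [glueFun_val_eq hk hi u v hp hc,
      show (⟨p, hp⟩ : Fin (n*k+r)) = p0 from Fin.ext (show p = (p0:ℕ) by omega), hwp0]
  · show (glueFun hk hi u v ⟨p, hp⟩ : ℕ) = (w ⟨p, hp⟩ : ℕ)
    rw [glueFun_val_gt hk hi u v hp hc (by omega),
      hv (p - (r + i*k) - 1) (by omega) (by omega)]
    have e : (⟨r + i*k + 1 + (p - (r + i*k) - 1), by omega⟩ : Fin (n*k+r)) = ⟨p, hp⟩ :=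
      Fin.ext (show r + i*k + 1 + (p - (r + i*k) - 1) = p by omega)
    rw [e]
    have hb := hsmall p hp hc
    omega

lemma strictMono_of_adj {s : ℕ} {α : Type*} [Preorder α] (f : Fin s → α)
    (h : ∀ (j : ℕ) (hj : j+1 < s), f ⟨j, by omega⟩ < f ⟨j+1, hj⟩) : StrictMono f := by
  have key : ∀ (d p : ℕ) (hp : p < s) (hq : p + d + 1 < s), f ⟨p, hp⟩ < f ⟨p+d+1, hq⟩ := by
    intro d
    induction d with
    | zero => intro p hp hq; exact h p hq
    | succ d IH =>
        intro p hp hq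
        exact (IH p hp (by omega)).trans (h (p+d+1) hq)
  intro p q hpq
  obtain ⟨p, hp⟩ := p
  obtain ⟨q, hq⟩ := q
  rw [Fin.mk_lt_mk] at hpq
  have e : (⟨p + (q - p - 1) + 1, by omega⟩ : Fin s) = ⟨q, hq⟩ :=
    Fin.ext (show p + (q - p - 1) + 1 = q by omega)
  have := key (q - p - 1) p hp (by omega)
  rwa [e] at this

lemma base_card (k r : ℕ) :
    Nat.card {w : Equiv.Perm (Fin (0*k+r)) // MemLr 0 k r w ∧ AvoidsPat ⇑w ![2,1,3]} = 1 := by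
  have hz : 0*k = 0 := Nat.zero_mul k
  have huniq : ∀ w : Equiv.Perm (Fin (0*k+r)),
      (MemLr 0 k r w ∧ AvoidsPat ⇑w ![2,1,3]) ↔ w = 1 := by
    intro w
    constructor
    · rintro ⟨⟨hc1, -, -, -⟩, -⟩
      have hsm : StrictMono ⇑w := strictMono_of_adj _ (fun j hj => hc1 j (by omega))
      haveI : WellFoundedLT (Fin (0*k+r)) := Finite.to_wellFoundedLT
      have hco : ⇑w = id := (hsm.range_inj strictMono_id).1
        (by rw [Set.range_id, Set.range_eq_univ]; exact w.surjective)
      exact Equiv.ext fun p => congrFun hco p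
    · rintro rfl
      refine ⟨⟨?_, ?_, ?_, ?_⟩, ?_⟩
      · intro j hj
        show (⟨j, _⟩ : Fin (0*k+r)) < ⟨j+1, _⟩
        exact Fin.mk_lt_mk.mpr (by omega)
      · intro a j ha hj; exact absurd ha (by omega)
      · intro a j ha hj; exact absurd ha (by omega)
      · intro j hj hb; exact absurd hb (by omega)
      · intro hC
        rw [contains213_iff] at hC
        obtain ⟨a, b, c, hab, hbc, hx1, hx2⟩ := hC
        simp only [Equiv.Perm.coe_one, id_eq] at hx1
        exact absurd hx1 (lt_asymm hab)
  rw [Nat.card_eq_one_iff_unique]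
  refine ⟨⟨fun x y => ?_⟩, ⟨⟨1, (huniq 1).mpr rfl⟩⟩⟩
  obtain ⟨x, hx⟩ := x
  obtain ⟨y, hy⟩ := y
  exact Subtype.ext (((huniq x).mp hx).trans ((huniq y).mp hy).symm)

lemma glue_inj_idx {n k r : ℕ} (hk : 1 ≤ k) {i1 i2 : ℕ} (h1 : i1 < n) (h2 : i2 < n)
    (u1 : Equiv.Perm (Fin (i1*k+r))) (v1 : Equiv.Perm (Fin ((n-1-i1)*k+(k-1))))
    (u2 : Equiv.Perm (Fin (i2*k+r))) (v2 : Equiv.Perm (Fin ((n-1-i2)*k+(k-1))))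
    (h : gluePerm hk h1 u1 v1 = gluePerm hk h2 u2 v2) : i1 = i2 := by
  by_contra hne
  have hN1 := glue_len n k r i1 hk h1
  have hN2 := glue_len n k r i2 hk h2
  have hA1 : r + i1*k < n*k+r := by omega
  have hv0 : (glueFun hk h1 u1 v1 ⟨r + i1*k, hA1⟩ : ℕ) = 0 :=
    glueFun_val_eq hk h1 u1 v1 hA1 rfl
  have hv0' : (glueFun hk h2 u2 v2 ⟨r + i1*k, hA1⟩ : ℕ) = 0 := by
    rw [show glueFun hk h2 u2 v2 = ⇑(gluePerm hk h2 u2 v2) from rfl, ← h]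
    exact hv0
  rcases lt_or_gt_of_ne hne with hlt|hlt
  · have hm1 := kmul_mono (k := k) (show i1+1 ≤ i2 by omega)
    have hm2 := kmul_succ i1 k
    rw [glueFun_val_lt hk h2 u2 v2 hA1 (by omega) (by omega)] at hv0'
    omega
  · have hm1 := kmul_mono (k := k) (show i2+1 ≤ i1 by omega)
    have hm2 := kmul_succ i2 k
    rw [glueFun_val_gt hk h2 u2 v2 hA1 (by omega) (by omega)] at hv0'
    omega

lemma glue_inj_uv {n k r : ℕ} (hk : 1 ≤ k) {i : ℕ} (hi : i < n)
    (u1 u2 : Equiv.Perm (Fin (i*k+r))) (v1 v2 : Equiv.Perm (Fin ((n-1-i)*k+(k-1))))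
    (h : gluePerm hk hi u1 v1 = gluePerm hk hi u2 v2) : u1 = u2 ∧ v1 = v2 := by
  have hN := glue_len n k r i hk hi
  constructor
  · apply Equiv.ext
    intro p
    apply Fin.ext
    obtain ⟨p, hp⟩ := p
    have hpN : p < n*k+r := by omega
    have e1 := glueFun_val_lt hk hi u1 v1 hpN (by omega) hp
    have e2 := glueFun_val_lt hk hi u2 v2 hpN (by omega) hp
    have hh : (glueFun hk hi u1 v1 ⟨p, hpN⟩ : ℕ) = (glueFun hk hi u2 v2 ⟨p, hpN⟩ : ℕ) := by
      rw [show glueFun hk hi u1 v1 = ⇑(gluePerm hk hi u1 v1) from rfl,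
        show glueFun hk hi u2 v2 = ⇑(gluePerm hk hi u2 v2) from rfl, h]
    omega
  · apply Equiv.ext
    intro q
    apply Fin.ext
    obtain ⟨q, hq⟩ := q
    have hpN : r + i*k + 1 + q < n*k+r := by omega
    have e1 := glueFun_val_gt hk hi u1 v1 hpN (by omega) (by omega)
    have e2 := glueFun_val_gt hk hi u2 v2 hpN (by omega) (by omega)
    have ee : (⟨r + i*k + 1 + q - (r + i*k) - 1, by omega⟩ : Fin ((n-1-i)*k+(k-1)))
        = ⟨q, hq⟩ := Fin.ext (show r + i*k + 1 + q - (r + i*k) - 1 = q by omega)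
    rw [ee] at e1 e2
    have hh : (glueFun hk hi u1 v1 ⟨r + i*k + 1 + q, hpN⟩ : ℕ)
        = (glueFun hk hi u2 v2 ⟨r + i*k + 1 + q, hpN⟩ : ℕ) := by
      rw [show glueFun hk hi u1 v1 = ⇑(gluePerm hk hi u1 v1) from rfl,
        show glueFun hk hi u2 v2 = ⇑(gluePerm hk hi u2 v2) from rfl, h]
    omega

lemma L_card (k : ℕ) (hk : 1 ≤ k) : ∀ n r, r ≤ k - 1 →
    Nat.card {w : Equiv.Perm (Fin (n*k+r)) // MemLr n k r w ∧ AvoidsPat ⇑w ![2,1,3]}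
      = catalan n := by
  intro n
  induction n using Nat.strong_induction_on with
  | _ n IH =>
    intro r hr
    match n, IH with
    | 0, _ => exact (base_card k r).trans catalan_zero.symm
    | (m+1), IH =>
      have hbij : Function.Bijective (fun t :
          (idx : Fin (m+1)) ×
            ({u : Equiv.Perm (Fin ((idx:ℕ)*k+r)) //
                MemLr (idx:ℕ) k r u ∧ AvoidsPat ⇑u ![2,1,3]} ×
             {v : Equiv.Perm (Fin ((m+1-1-(idx:ℕ))*k+(k-1))) //
                MemLr (m+1-1-(idx:ℕ)) k (k-1) v ∧ AvoidsPat ⇑v ![2,1,3]}) =>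
          (⟨gluePerm hk t.1.isLt t.2.1.1 t.2.2.1,
            (memLr_glue_iff hk t.1.isLt t.2.1.1 t.2.2.1 hr).mpr ⟨t.2.1.2.1, t.2.2.2.1⟩,
            (avoids_glue_iff hk t.1.isLt t.2.1.1 t.2.2.1).mpr ⟨t.2.1.2.2, t.2.2.2.2⟩⟩ :
            {w : Equiv.Perm (Fin ((m+1)*k+r)) //
              MemLr (m+1) k r w ∧ AvoidsPat ⇑w ![2,1,3]})) := by
        constructor
        · rintro ⟨i1, ⟨u1, hu1⟩, ⟨v1, hv1⟩⟩ ⟨i2, ⟨u2, hu2⟩, ⟨v2, hv2⟩⟩ h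
          have hg := congrArg Subtype.val h
          simp only at hg
          have hidx : (i1:ℕ) = (i2:ℕ) := glue_inj_idx hk i1.isLt i2.isLt u1 v1 u2 v2 hg
          have hidx' : i1 = i2 := Fin.ext hidx
          subst hidx'
          obtain ⟨heu, hev⟩ := glue_inj_uv hk i1.isLt u1 u2 v1 v2 hg
          subst heu
          subst hev
          rfl
        · rintro ⟨w, hmem, hav⟩
          obtain ⟨i, hi', u, v, hglue⟩ := decompose hk (by omega) hr w hmem hav
          rw [← hglue] at hmem hav
          obtain ⟨hmu, hmv⟩ := (memLr_glue_iff hk hi' u v hr).mp hmem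
          obtain ⟨hau, hav'⟩ := (avoids_glue_iff hk hi' u v).mp hav
          exact ⟨⟨⟨i, hi'⟩, ⟨u, hmu, hau⟩, ⟨v, hmv, hav'⟩⟩, Subtype.ext hglue⟩
      calc Nat.card {w : Equiv.Perm (Fin ((m+1)*k+r)) //
              MemLr (m+1) k r w ∧ AvoidsPat ⇑w ![2,1,3]}
          = Nat.card ((idx : Fin (m+1)) ×
            ({u : Equiv.Perm (Fin ((idx:ℕ)*k+r)) //
                MemLr (idx:ℕ) k r u ∧ AvoidsPat ⇑u ![2,1,3]} ×
             {v : Equiv.Perm (Fin ((m+1-1-(idx:ℕ))*k+(k-1))) //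
                MemLr (m+1-1-(idx:ℕ)) k (k-1) v ∧ AvoidsPat ⇑v ![2,1,3]})) :=
            (Nat.card_eq_of_bijective _ hbij).symm
        _ = ∑ idx : Fin (m+1),
              Nat.card ({u : Equiv.Perm (Fin ((idx:ℕ)*k+r)) //
                MemLr (idx:ℕ) k r u ∧ AvoidsPat ⇑u ![2,1,3]} ×
              {v : Equiv.Perm (Fin ((m+1-1-(idx:ℕ))*k+(k-1))) //
                MemLr (m+1-1-(idx:ℕ)) k (k-1) v ∧ AvoidsPat ⇑v ![2,1,3]}) :=
            nat_card_sigma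
        _ = ∑ idx : Fin (m+1), catalan (idx:ℕ) * catalan (m - (idx:ℕ)) := by
            apply Finset.sum_congr rfl
            intro idx _
            rw [Nat.card_prod, IH (idx:ℕ) (by omega) r hr,
              IH (m+1-1-(idx:ℕ)) (by omega) (k-1) (le_refl _),
              show m+1-1-(idx:ℕ) = m - (idx:ℕ) by omega]
        _ = catalan (m+1) := (catalan_succ m).symm

/-- `|L_{n,k;r}(213)| = C_n`, the `n`-th Catalan number (in particular, for `r = 0`,
`|L_{n,k}(213)| = C_n`). -/
theorem stmt_13 (n k r : ℕ) (hn : 1 ≤ n) (hk : 1 ≤ k) (hr : r ≤ k - 1) :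
    Nat.card {w : Equiv.Perm (Fin (n * k + r)) //
        MemLr n k r w ∧ AvoidsPat (⇑w) ![2, 1, 3]} = catalan n := by
  exact L_card k hk n r hr
end
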